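/- arXiv:0909.4570 — 10 statements merged into one kernel-verified Lean document; each statement's English description precedes it below -/
import Mathlib

section
/- Let X and Y be continuous random variables supported on (0,∞) with densities f and g, and suppose l(x) = log(f(x)/g(x)) is continuous and concave on (0,∞). Then X ≤_st Y (i.e., 1−F(x) ≤ 1−G(x) for all x) if and only if lim_{x↓0} l(x) ≥ 0. -/
/-!
On `(0, ∞)` the sign of `l = log (f / g)` is the sign of `f - g`, and concavity makes every
superlevel set `{l ≥ c}` an interval. If `liminf_{x ↓ 0} l ≥ 0`, the intervals `{l ≥ -ε}` reach
down to `0`, so `{f ≥ g}` is an initial segment of `(0, ∞)`: the densities cross once, from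
`f ≥ g` to `f < g`, which gives `X ≤_st Y`. If the liminf is negative, concavity upgrades
"frequently `l < c < 0`" to "eventually", so `f < g` on some `(0, b]` and `F(b) < G(b)`.
-/

open MeasureTheory Set Filter Topology

namespace ConcaveOn

variable {l : ℝ → ℝ} {a : ℝ}

theorem eventually_lt_or_eventually_le (hl : ConcaveOn ℝ (Ioi a) l) (c : ℝ) :
    (∀ᶠ x in 𝓝[>] a, l x < c) ∨ ∀ᶠ x in 𝓝[>] a, c ≤ l x := by
  refine or_iff_not_imp_left.2 fun h => ?_
  have hfreq : ∃ᶠ x in 𝓝[>] a, c ≤ l x := (not_eventually.1 h).mono fun _ => le_of_not_gt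
  obtain ⟨t, hct, ht⟩ := (hfreq.and_eventually self_mem_nhdsWithin).exists
  filter_upwards [Ioo_mem_nhdsGT (mem_Ioi.1 ht)] with x hx
  obtain ⟨w, hcw, hw⟩ := (hfreq.and_eventually (Ioo_mem_nhdsGT hx.1)).exists
  calc c ≤ min (l w) (l t) := le_min hcw hct
    _ ≤ l x := hl.ge_on_segment hw.1 ht
      (by rw [segment_eq_Icc (hw.2.trans hx.2).le]; exact ⟨hw.2.le, hx.2.le⟩)

theorem eventually_lt_of_liminf_lt (hl : ConcaveOn ℝ (Ioi a) l) {c : ℝ}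
    (h : liminf (fun x => (l x : EReal)) (𝓝[>] a) < c) : ∀ᶠ x in 𝓝[>] a, l x < c := by
  refine (hl.eventually_lt_or_eventually_le c).resolve_right fun hle => h.not_ge ?_
  exact le_liminf_of_le (by isBoundedDefault) (hle.mono fun _ hx => EReal.coe_le_coe_iff.2 hx)

theorem le_of_le_liminf (hl : ConcaveOn ℝ (Ioi a) l) {c : ℝ}
    (h : (c : EReal) ≤ liminf (fun x => (l x : EReal)) (𝓝[>] a)) {y s : ℝ} (hy : a < y)
    (hys : y ≤ s) (hs : c ≤ l s) : c ≤ l y := by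
  by_contra! hyc
  obtain ⟨c', hyc', hc'c⟩ := exists_between hyc
  have hev : ∀ᶠ x in 𝓝[>] a, c' < l x :=
    (eventually_lt_of_lt_liminf ((EReal.coe_lt_coe_iff.2 hc'c).trans_le h)).mono
      fun _ hx => EReal.coe_lt_coe_iff.1 hx
  obtain ⟨w, hcw, hw⟩ := (hev.and (Ioo_mem_nhdsGT hy)).exists
  have hmin : min (l w) (l s) ≤ l y := hl.ge_on_segment hw.1 (hy.trans_le hys)
    (by rw [segment_eq_Icc (hw.2.le.trans hys)]; exact ⟨hw.2.le, hys⟩)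
  exact (lt_min (hyc'.trans hcw) (hyc.trans_le hs)).not_ge hmin

end ConcaveOn

theorem Real.log_div_nonneg_iff {a b : ℝ} (ha : 0 < a) (hb : 0 < b) :
    0 ≤ Real.log (a / b) ↔ b ≤ a := by
  rw [Real.log_nonneg_iff (div_pos ha hb), one_le_div hb]

theorem Real.log_div_neg_iff {a b : ℝ} (ha : 0 < a) (hb : 0 < b) :
    Real.log (a / b) < 0 ↔ a < b := by
  simpa only [not_le] using (Real.log_div_nonneg_iff ha hb).not

section Integral

variable {α : Type*} [MeasurableSpace α] {μ : Measure α} {f g : α → ℝ}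

theorem setIntegral_compl_le_iff {s : Set α} (hs : MeasurableSet s) (hf : Integrable f μ)
    (hg : Integrable g μ) (hfg : ∫ x, f x ∂μ = ∫ x, g x ∂μ) :
    ∫ x in sᶜ, f x ∂μ ≤ ∫ x in sᶜ, g x ∂μ ↔ ∫ x in s, g x ∂μ ≤ ∫ x in s, f x ∂μ := by
  have hf' := integral_add_compl hs hf
  have hg' := integral_add_compl hs hg
  constructor <;> intro h <;> linarith

theorem setIntegral_lt_setIntegral_of_le_of_lt_on {s t : Set α} (hs : MeasurableSet s)
    (hf : IntegrableOn f s μ) (hg : IntegrableOn g s μ) (hle : ∀ x ∈ s, f x ≤ g x)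
    (hts : t ⊆ s) (ht : μ t ≠ 0) (hlt : ∀ x ∈ t, f x < g x) :
    ∫ x in s, f x ∂μ < ∫ x in s, g x ∂μ := by
  rw [← sub_pos, ← integral_sub hg hf, setIntegral_pos_iff_support_of_nonneg_ae
    ((ae_restrict_iff' hs).2 (.of_forall fun x hx => sub_nonneg.2 (hle x hx))) (hg.sub hf)]
  refine pos_iff_ne_zero.2 fun h0 => ht (measure_mono_null (fun x hx => ?_) h0)
  exact ⟨(sub_pos.2 (hlt x hx)).ne', hts hx⟩

end Integral

theorem setIntegral_Ioi_le_of_single_crossing {μ : Measure ℝ} {f g : ℝ → ℝ} (hf : Integrable f μ)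
    (hg : Integrable g μ) (hfg : ∫ x, f x ∂μ = ∫ x, g x ∂μ)
    (hcross : ∀ y z, y ≤ z → g z ≤ f z → g y ≤ f y) (x : ℝ) :
    ∫ y in Ioi x, f y ∂μ ≤ ∫ y in Ioi x, g y ∂μ := by
  by_cases h : ∃ z, x ≤ z ∧ g z ≤ f z
  · obtain ⟨z, hxz, hz⟩ := h
    rw [← compl_Iic, setIntegral_compl_le_iff measurableSet_Iic hf hg hfg]
    exact setIntegral_mono_on hg.integrableOn hf.integrableOn measurableSet_Iic
      fun y hy => hcross y z (le_trans hy hxz) hz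
  · push Not at h
    exact setIntegral_mono_on hf.integrableOn hg.integrableOn measurableSet_Ioi
      fun y hy => (h y (le_of_lt hy)).le

theorem stmt_0_general (f g : ℝ → ℝ)
    (hf_pos : ∀ x, 0 < x → 0 < f x) (hf_supp : ∀ x, x ≤ 0 → f x = 0)
    (hg_pos : ∀ x, 0 < x → 0 < g x) (hg_supp : ∀ x, x ≤ 0 → g x = 0)
    (hf_int : ∫ x, f x = 1) (hg_int : ∫ x, g x = 1)
    (hl_conc : ConcaveOn ℝ (Ioi 0) (fun x => Real.log (f x / g x))) :
    (∀ x : ℝ, ∫ y in Ioi x, f y ≤ ∫ y in Ioi x, g y) ↔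
      0 ≤ liminf (fun x => (Real.log (f x / g x) : EReal)) (nhdsWithin 0 (Ioi 0)) := by
  have hf : Integrable f := .of_integral_ne_zero (by simp [hf_int])
  have hg : Integrable g := .of_integral_ne_zero (by simp [hg_int])
  have hfg : ∫ x, f x = ∫ x, g x := hf_int.trans hg_int.symm
  constructor
  · intro hst
    by_contra! hlim
    obtain ⟨b, hb, hneg⟩ := mem_nhdsGT_iff_exists_Ioc_subset.1
      (hl_conc.eventually_lt_of_liminf_lt (c := 0) (by exact_mod_cast hlim))
    have hlt : ∀ y ∈ Ioc 0 b, f y < g y := fun y hy =>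
      (Real.log_div_neg_iff (hf_pos y hy.1) (hg_pos y hy.1)).1 (hneg hy)
    have hle : ∀ y ∈ Iic b, f y ≤ g y := fun y hy => by
      rcases le_or_gt y 0 with hy0 | hy0
      · rw [hf_supp y hy0, hg_supp y hy0]
      · exact (hlt y ⟨hy0, hy⟩).le
    have hF : ∫ y in Iic b, f y < ∫ y in Iic b, g y :=
      setIntegral_lt_setIntegral_of_le_of_lt_on measurableSet_Iic hf.integrableOn hg.integrableOn
        hle Ioc_subset_Iic_self (by simpa using hb) hlt
    have := hst b
    rw [← compl_Iic, setIntegral_compl_le_iff measurableSet_Iic hf hg hfg] at this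
    exact hF.not_ge this
  · intro hlim
    refine setIntegral_Ioi_le_of_single_crossing hf hg hfg fun y z hyz hz => ?_
    rcases le_or_gt y 0 with hy | hy
    · rw [hf_supp y hy, hg_supp y hy]
    have hz0 : 0 < z := hy.trans_le hyz
    refine (Real.log_div_nonneg_iff (hf_pos y hy) (hg_pos y hy)).1 ?_
    exact hl_conc.le_of_le_liminf (c := 0) (by exact_mod_cast hlim) hy hyz
      ((Real.log_div_nonneg_iff (hf_pos z hz0) (hg_pos z hz0)).2 hz)

/-- Theorem 1(1), "st" part: for continuous random variables supported on `(0, ∞)`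
with densities `f` and `g` such that `l(x) = log (f x / g x)` is continuous and concave
on `(0, ∞)`, the stochastic order `X ≤_st Y` holds iff `lim_{x ↓ 0} l(x) ≥ 0`. -/
theorem stmt_0 (f g : ℝ → ℝ)
    (hf_meas : Measurable f) (hg_meas : Measurable g)
    (hf_pos : ∀ x, 0 < x → 0 < f x) (hf_supp : ∀ x, x ≤ 0 → f x = 0)
    (hg_pos : ∀ x, 0 < x → 0 < g x) (hg_supp : ∀ x, x ≤ 0 → g x = 0)
    (hf_int : ∫ x, f x = 1) (hg_int : ∫ x, g x = 1)
    (hl_cont : ContinuousOn (fun x => Real.log (f x / g x)) (Ioi 0))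
    (hl_conc : ConcaveOn ℝ (Ioi 0) (fun x => Real.log (f x / g x))) :
    (∀ x : ℝ, ∫ y in Ioi x, f y ≤ ∫ y in Ioi x, g y) ↔
      0 ≤ liminf (fun x => (Real.log (f x / g x) : EReal)) (nhdsWithin 0 (Ioi 0)) :=
  stmt_0_general f g hf_pos hf_supp hg_pos hg_supp hf_int hg_int hl_conc
end

section
/- Let X and Y be continuous random variables supported on (0,∞) with densities f and g, and suppose l(x) = log(f(x)/g(x)) is continuous and concave. If X ≤_st Y then X ≤_hr Y, i.e., f(x)/(1−F(x)) ≥ g(x)/(1−G(x)) for all x > 0. -/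
/-!
Put `c = f x / g x`. If the likelihood ratio `f / g` stays below `c` to the right of `x`,
integrating over `(x, ∞)` gives `F̄(x) ≤ c Ḡ(x)`, which is the claim. Otherwise `log (f / g)`
rises somewhere to the right of `x`, so by concavity it stays below its value at `x` on `(0, x]`,
i.e. `f ≤ c g` there. As `X ≤_st Y` says `∫_(0,x] g ≤ ∫_(0,x] f`, this forces `c ≥ 1`, and then
`g x F̄(x) ≤ f x Ḡ(x)` is just `g x ≤ f x` times `F̄(x) ≤ Ḡ(x)`.
-/

open MeasureTheory Set

theorem ConcaveOn.le_of_le_of_lt_right {s : Set ℝ} {φ : ℝ → ℝ} (hφ : ConcaveOn ℝ s φ)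
    {z x y : ℝ} (hz : z ∈ s) (hy : y ∈ s) (hzx : z ≤ x) (hxy : x < y) (hφxy : φ x < φ y) :
    φ z ≤ φ x := by
  rcases hzx.eq_or_lt with rfl | hzx
  · exact le_rfl
  · refine (hφ.left_lt_of_lt_right hz hy ?_ hφxy).le
    rw [openSegment_eq_Ioo (hzx.trans hxy)]
    exact ⟨hzx, hxy⟩

theorem le_of_le_of_lt_right_of_concaveOn_log {r : ℝ → ℝ} (hr : ∀ z, 0 < z → 0 < r z)
    (hconc : ConcaveOn ℝ (Ioi 0) fun z => Real.log (r z))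
    {z x y : ℝ} (hz : 0 < z) (hzx : z ≤ x) (hxy : x < y) (hrxy : r x < r y) : r z ≤ r x := by
  have hx : 0 < x := hz.trans_le hzx
  rw [← Real.log_le_log_iff (hr z hz) (hr x hx)]
  exact hconc.le_of_le_of_lt_right hz (hx.trans hxy) hzx hxy (Real.log_lt_log (hr x hx) hrxy)

theorem setIntegral_pos_of_forall_pos {X : Type*} [MeasurableSpace X] {μ : Measure X}
    {s : Set X} {h : X → ℝ} (hs : MeasurableSet s) (hμs : μ s ≠ 0) (hi : IntegrableOn h s μ)
    (hpos : ∀ z ∈ s, 0 < h z) : 0 < ∫ z in s, h z ∂μ := by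
  rw [setIntegral_pos_iff_support_of_nonneg_ae
    (ae_restrict_of_forall_mem hs fun z hz => (hpos z hz).le) hi,
    inter_eq_right.2 fun z hz => Function.mem_support.2 (hpos z hz).ne']
  exact pos_iff_ne_zero.2 hμs

theorem setIntegral_le_mul_of_div_le {X : Type*} [MeasurableSpace X] {μ : Measure X}
    {s : Set X} {f g : X → ℝ} {c : ℝ} (hs : MeasurableSet s) (hfi : IntegrableOn f s μ)
    (hgi : IntegrableOn g s μ) (hg : ∀ z ∈ s, 0 < g z) (hfg : ∀ z ∈ s, f z / g z ≤ c) :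
    ∫ z in s, f z ∂μ ≤ c * ∫ z in s, g z ∂μ := by
  rw [← integral_const_mul]
  refine setIntegral_mono_on hfi (hgi.const_mul c) hs fun z hz => ?_
  rw [← div_le_iff₀ (hg z hz)]
  exact hfg z hz

theorem integral_Ioc_add_integral_Ioi {h : ℝ → ℝ} (hi : Integrable h)
    (hsupp : ∀ z, z ≤ 0 → h z = 0) {x : ℝ} (hx : 0 ≤ x) :
    (∫ z in Ioc 0 x, h z) + ∫ z in Ioi x, h z = ∫ z, h z := by
  rw [← setIntegral_union Ioc_disjoint_Ioi_same measurableSet_Ioi hi.integrableOn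
    hi.integrableOn, Ioc_union_Ioi_eq_Ioi hx]
  exact setIntegral_eq_integral_of_forall_compl_eq_zero fun z hz => hsupp z (not_lt.1 hz)

theorem stmt_1_general (f g : ℝ → ℝ)
    (hf_pos : ∀ x, 0 < x → 0 < f x) (hf_supp : ∀ x, x ≤ 0 → f x = 0)
    (hg_pos : ∀ x, 0 < x → 0 < g x) (hg_supp : ∀ x, x ≤ 0 → g x = 0)
    (hf_int : ∫ x, f x = 1) (hg_int : ∫ x, g x = 1)
    (hl_conc : ConcaveOn ℝ (Ioi 0) (fun x => Real.log (f x / g x)))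
    (hst : ∀ x : ℝ, ∫ y in Ioi x, f y ≤ ∫ y in Ioi x, g y) :
    ∀ x : ℝ, 0 < x →
      g x / (∫ y in Ioi x, g y) ≤ f x / (∫ y in Ioi x, f y) := by
  intro x hx
  have hfi : Integrable f := .of_integral_ne_zero (by simp [hf_int])
  have hgi : Integrable g := .of_integral_ne_zero (by simp [hg_int])
  have hF : 0 < ∫ y in Ioi x, f y := setIntegral_pos_of_forall_pos measurableSet_Ioi (by simp)
    hfi.integrableOn fun y hy => hf_pos y (hx.trans hy)
  have hG : 0 < ∫ y in Ioi x, g y := setIntegral_pos_of_forall_pos measurableSet_Ioi (by simp)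
    hgi.integrableOn fun y hy => hg_pos y (hx.trans hy)
  rw [div_le_div_iff₀ hG hF]
  by_cases hrise : ∃ y, x < y ∧ f x / g x < f y / g y
  · obtain ⟨y, hxy, hrxy⟩ := hrise
    have hFleft : ∫ z in Ioc 0 x, f z ≤ f x / g x * ∫ z in Ioc 0 x, g z :=
      setIntegral_le_mul_of_div_le measurableSet_Ioc hfi.integrableOn hgi.integrableOn
        (fun z hz => hg_pos z hz.1) fun z hz =>
          le_of_le_of_lt_right_of_concaveOn_log (fun z hz => div_pos (hf_pos z hz) (hg_pos z hz)) hl_conc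
            hz.1 hz.2 hxy hrxy
    have hGleft : 0 < ∫ z in Ioc 0 x, g z := setIntegral_pos_of_forall_pos measurableSet_Ioc
      (by simp [hx]) hgi.integrableOn fun z hz => hg_pos z hz.1
    have hst_left : ∫ z in Ioc 0 x, g z ≤ ∫ z in Ioc 0 x, f z := by
      have hsplit_f := integral_Ioc_add_integral_Ioi hfi hf_supp hx.le
      have hsplit_g := integral_Ioc_add_integral_Ioi hgi hg_supp hx.le
      linarith [hst x]
    have hc : 1 ≤ f x / g x := le_of_mul_le_mul_right (by linarith) hGleft
    have hgf : g x ≤ f x := by rwa [le_div_iff₀ (hg_pos x hx), one_mul] at hc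
    exact mul_le_mul hgf (hst x) hF.le (hf_pos x hx).le
  · push Not at hrise
    have hFright : ∫ y in Ioi x, f y ≤ f x / g x * ∫ y in Ioi x, g y :=
      setIntegral_le_mul_of_div_le measurableSet_Ioi hfi.integrableOn hgi.integrableOn
        (fun y hy => hg_pos y (hx.trans hy)) hrise
    calc g x * ∫ y in Ioi x, f y ≤ g x * (f x / g x * ∫ y in Ioi x, g y) :=
          mul_le_mul_of_nonneg_left hFright (hg_pos x hx).le
      _ = f x * ∫ y in Ioi x, g y := by field_simp [(hg_pos x hx).ne']

/-- Theorem 1(1), "hr" part: for continuous random variables supported on `(0, ∞)`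
with densities `f` and `g` such that `l(x) = log (f x / g x)` is continuous and concave
on `(0, ∞)`, the stochastic order `X ≤_st Y` implies the hazard rate order `X ≤_hr Y`. -/
theorem stmt_1 (f g : ℝ → ℝ)
    (hf_meas : Measurable f) (hg_meas : Measurable g)
    (hf_pos : ∀ x, 0 < x → 0 < f x) (hf_supp : ∀ x, x ≤ 0 → f x = 0)
    (hg_pos : ∀ x, 0 < x → 0 < g x) (hg_supp : ∀ x, x ≤ 0 → g x = 0)
    (hf_int : ∫ x, f x = 1) (hg_int : ∫ x, g x = 1)
    (hl_cont : ContinuousOn (fun x => Real.log (f x / g x)) (Ioi 0))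
    (hl_conc : ConcaveOn ℝ (Ioi 0) (fun x => Real.log (f x / g x)))
    (hst : ∀ x : ℝ, ∫ y in Ioi x, f y ≤ ∫ y in Ioi x, g y) :
    ∀ x : ℝ, 0 < x →
      g x / (∫ y in Ioi x, g y) ≤ f x / (∫ y in Ioi x, f y) :=
  stmt_1_general f g hf_pos hf_supp hg_pos hg_supp hf_int hg_int hl_conc hst
end

section
/- Let X and Y be continuous random variables supported on (0,∞) with densities f and g, and suppose l(x) = log(f(x)/g(x)) is continuously differentiable and concave. If X ≤_rh Y then X ≤_lr Y. -/
/-!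
If `f / g` increased somewhere, say `f x / g x < f y / g y` with `x < y`, concavity of
`log (f / g)` would force `f / g < f x / g x` on all of `(0, x)`. Integrating `f < (f x / g x) g`
over `(0, x]` then gives `f x / F x > g x / G x`, against the reversed hazard rate order.
-/

open MeasureTheory Set

theorem ConcaveOn.apply_lt_of_apply_lt {s : Set ℝ} {l : ℝ → ℝ} (hl : ConcaveOn ℝ s l)
    {t x y : ℝ} (ht : t ∈ s) (hy : y ∈ s) (htx : t < x) (hxy : x < y) (h : l x < l y) :
    l t < l x := by
  have hslope_pos : 0 < (l y - l x) / (y - x) := div_pos (sub_pos.2 h) (sub_pos.2 hxy)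
  have hslope_left : 0 < (l x - l t) / (x - t) :=
    hslope_pos.trans_le (hl.slope_anti_adjacent ht hy htx hxy)
  exact sub_pos.1 ((div_pos_iff_of_pos_right (sub_pos.2 htx)).1 hslope_left)

theorem setIntegral_Ioc_lt_setIntegral_Ioc {f g : ℝ → ℝ} {a b : ℝ} (hab : a < b)
    (hf : IntegrableOn f (Ioc a b)) (hg : IntegrableOn g (Ioc a b))
    (hlt : ∀ x ∈ Ioo a b, f x < g x) :
    ∫ x in Ioc a b, f x < ∫ x in Ioc a b, g x := by
  have hpos := intervalIntegral.intervalIntegral_pos_of_pos_on (f := fun x => g x - f x)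
    ((intervalIntegrable_iff_integrableOn_Ioc_of_le hab.le).2 (hg.sub hf))
    (fun x hx => sub_pos.2 (hlt x hx)) hab
  rw [intervalIntegral.integral_of_le hab.le, integral_sub hg hf] at hpos
  exact sub_pos.1 hpos

theorem div_setIntegral_Ioc_lt_of_ratio_lt {f g : ℝ → ℝ} {a x : ℝ} (hax : a < x)
    (hf : IntegrableOn f (Ioc a x)) (hg : IntegrableOn g (Ioc a x))
    (hf_pos : ∀ t ∈ Ioc a x, 0 < f t) (hg_pos : ∀ t ∈ Ioc a x, 0 < g t)
    (hratio : ∀ t ∈ Ioo a x, f t / g t < f x / g x) :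
    g x / ∫ t in Ioc a x, g t < f x / ∫ t in Ioc a x, f t := by
  have hgx := hg_pos x (right_mem_Ioc.2 hax)
  have hF : 0 < ∫ t in Ioc a x, f t := by
    simpa using setIntegral_Ioc_lt_setIntegral_Ioc hax integrableOn_zero hf
      fun t ht => hf_pos t (Ioo_subset_Ioc_self ht)
  have hG : 0 < ∫ t in Ioc a x, g t := by
    simpa using setIntegral_Ioc_lt_setIntegral_Ioc hax integrableOn_zero hg
      fun t ht => hg_pos t (Ioo_subset_Ioc_self ht)
  have hFG : ∫ t in Ioc a x, f t < f x / g x * ∫ t in Ioc a x, g t := by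
    rw [← integral_const_mul]
    exact setIntegral_Ioc_lt_setIntegral_Ioc hax hf (hg.const_mul _) fun t ht =>
      (div_lt_iff₀ (hg_pos t (Ioo_subset_Ioc_self ht))).1 (hratio t ht)
  rw [div_lt_div_iff₀ hG hF]
  calc g x * ∫ t in Ioc a x, f t < g x * (f x / g x * ∫ t in Ioc a x, g t) :=
        mul_lt_mul_of_pos_left hFG hgx
    _ = f x * ∫ t in Ioc a x, g t := by field_simp

theorem stmt_3_general (f g : ℝ → ℝ)
    (hf_pos : ∀ x, 0 < x → 0 < f x)
    (hg_pos : ∀ x, 0 < x → 0 < g x)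
    (hf_int : ∫ x, f x = 1) (hg_int : ∫ x, g x = 1)
    (hl_conc : ConcaveOn ℝ (Ioi 0) (fun x => Real.log (f x / g x)))
    (hrh : ∀ x : ℝ, 0 < x →
      f x / (∫ y in Ioc 0 x, f y) ≤ g x / (∫ y in Ioc 0 x, g y)) :
    AntitoneOn (fun x => f x / g x) (Ioi 0) := by
  intro x hx y hy hxy
  by_contra! h
  have hratio_pos : ∀ t, 0 < t → 0 < f t / g t := fun t ht =>
    div_pos (hf_pos t ht) (hg_pos t ht)
  have hxy' : x < y := hxy.lt_of_ne (by rintro rfl; exact lt_irrefl _ h)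
  have hlog : Real.log (f x / g x) < Real.log (f y / g y) := Real.log_lt_log (hratio_pos x hx) h
  have hratio : ∀ t ∈ Ioo 0 x, f t / g t < f x / g x := fun t ht =>
    (Real.log_lt_log_iff (hratio_pos t ht.1) (hratio_pos x hx)).1
      (hl_conc.apply_lt_of_apply_lt ht.1 hy ht.2 hxy' hlog)
  have hf_integ : Integrable f := Integrable.of_integral_ne_zero (by simp [hf_int])
  have hg_integ : Integrable g := Integrable.of_integral_ne_zero (by simp [hg_int])
  exact (hrh x hx).not_gt <| div_setIntegral_Ioc_lt_of_ratio_lt hx hf_integ.integrableOn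
    hg_integ.integrableOn (fun t ht => hf_pos t ht.1) (fun t ht => hg_pos t ht.1) hratio

/-- Theorem 1(2), "rh" part: for continuous random variables supported on `(0, ∞)`
with densities `f` and `g` such that `l(x) = log (f x / g x)` is continuously
differentiable and concave on `(0, ∞)`, the reversed hazard rate order `X ≤_rh Y`
implies the likelihood ratio order `X ≤_lr Y`. -/
theorem stmt_3 (f g : ℝ → ℝ) (l' : ℝ → ℝ)
    (hf_meas : Measurable f) (hg_meas : Measurable g)
    (hf_pos : ∀ x, 0 < x → 0 < f x) (hf_supp : ∀ x, x ≤ 0 → f x = 0)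
    (hg_pos : ∀ x, 0 < x → 0 < g x) (hg_supp : ∀ x, x ≤ 0 → g x = 0)
    (hf_int : ∫ x, f x = 1) (hg_int : ∫ x, g x = 1)
    (hl_deriv : ∀ x ∈ Ioi (0 : ℝ),
      HasDerivAt (fun x => Real.log (f x / g x)) (l' x) x)
    (hl'_cont : ContinuousOn l' (Ioi 0))
    (hl_conc : ConcaveOn ℝ (Ioi 0) (fun x => Real.log (f x / g x)))
    (hrh : ∀ x : ℝ, 0 < x →
      f x / (∫ y in Ioc 0 x, f y) ≤ g x / (∫ y in Ioc 0 x, g y)) :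
    AntitoneOn (fun x => f x / g x) (Ioi 0) :=
  stmt_3_general f g hf_pos hg_pos hf_int hg_int hl_conc hrh
end

section
/- Let X and Y be discrete random variables with probability mass functions f and g, both with support {0,1,...,n} (or all of the nonnegative integers), such that log(f(x)/g(x)) is concave on the support (i.e., f(x+1)f(x−1)g(x)^2 ≤ f(x)^2 g(x+1)g(x−1) for interior points x). Then X ≤_st Y if and only if f(0) ≥ g(0). -/
/-!
The ratio `r = f / g` satisfies `r (x + 2) * r x ≤ r (x + 1) ^ 2`, so once `r` decreases it keeps
decreasing: `r` first increases, then decreases. If `r 0 ≥ 1`, then at the first point where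
`f < g` the ratio has already entered its decreasing phase, so `f ≤ g` from there on; `f - g`
changes sign once, from `+` to `-`. Since both have total mass `1`, the tails of `f` are then
dominated by those of `g`: before the crossing, a tail is `1` minus a smaller partial sum; after
it, tails compare termwise. The converse is the case `k = 0`.
-/

open Set

theorem summable_ite_lt {f : ℕ → ℝ} (hf : Summable f) (k : ℕ) :
    Summable fun x => if k < x then f x else 0 :=
  (hf.indicator {x | k < x}).congr fun x => by simp [indicator_apply]

open Finset in
theorem tsum_ite_lt_eq_sub {f : ℕ → ℝ} (hf : Summable f) (k : ℕ) :
    ∑' x, (if k < x then f x else 0) = ∑' x, f x - ∑ x ∈ range (k + 1), f x := by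
  have hhead : HasSum (fun x => if k < x then 0 else f x)
      (∑ x ∈ range (k + 1), if k < x then 0 else f x) :=
    hasSum_sum_of_ne_finset_zero fun x hx => if_pos (by simpa [Nat.lt_succ_iff] using hx)
  rw [sum_ite_of_false fun x hx => by simpa [Nat.lt_succ_iff] using hx] at hhead
  have hsplit : (fun x => (if k < x then f x else 0) + if k < x then 0 else f x) = f :=
    funext fun x => by split_ifs <;> simp
  rw [eq_sub_iff_add_eq, ← ((summable_ite_lt hf k).hasSum.add hhead).tsum_eq, hsplit]

theorem tsum_ite_lt_le_of_crossing {f g : ℕ → ℝ} (hf : Summable f) (hg : Summable g)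
    (hfg : ∑' x, f x = ∑' x, g x) (hcross : ∀ x y, f x < g x → x ≤ y → f y ≤ g y) (k : ℕ) :
    ∑' x, (if k < x then f x else 0) ≤ ∑' x, if k < x then g x else 0 := by
  by_cases hlow : ∃ x ≤ k, f x < g x
  · obtain ⟨x₀, hx₀k, hx₀⟩ := hlow
    refine Summable.tsum_le_tsum (fun x => ?_) (summable_ite_lt hf k) (summable_ite_lt hg k)
    split_ifs with hx
    · exact hcross x₀ x hx₀ (by omega)
    · exact le_rfl
  · push Not at hlow
    rw [tsum_ite_lt_eq_sub hf, tsum_ite_lt_eq_sub hg, hfg]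
    gcongr with x hx
    exact hlow x (by simpa [Nat.lt_succ_iff] using hx)

section StepDown

variable {α : Type*} [LinearOrder α] {a : ℕ → α}

theorem antitoneOn_Ici_of_step_down (hstep : ∀ n, a (n + 1) ≤ a n → a (n + 2) ≤ a (n + 1))
    {j : ℕ} (hj : a (j + 1) ≤ a j) : AntitoneOn a (Ici j) :=
  antitoneOn_nat_Ici_of_succ_le fun n hn => by
    induction n, hn using Nat.le_induction with
    | base => exact hj
    | succ n _ ih => exact hstep n ih

theorem apply_le_apply_of_lt_apply_zero (hstep : ∀ n, a (n + 1) ≤ a n → a (n + 2) ≤ a (n + 1))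
    {x y : ℕ} (hx : a x < a 0) (hxy : x ≤ y) : a y ≤ a x := by
  obtain ⟨j, hjx, hj⟩ : ∃ j < x, a (j + 1) < a j := by
    by_contra! h
    have hmono : MonotoneOn a (Iic x) :=
      monotoneOn_of_le_add_one ordConnected_Iic fun n _ _ hn => h n (by simpa using hn)
    exact (hmono (by simp) self_mem_Iic (Nat.zero_le x)).not_gt hx
  exact antitoneOn_Ici_of_step_down hstep hj.le hjx.le (hjx.le.trans hxy) hxy

end StepDown

theorem div_step_down_succ (f g : ℕ → ℝ) (N : ℕ∞)
    (hf_nonneg : ∀ x, 0 ≤ f x) (hg_nonneg : ∀ x, 0 ≤ g x)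
    (hf_supp : ∀ x : ℕ, 0 < f x ↔ (x : ℕ∞) < N)
    (hg_supp : ∀ x : ℕ, 0 < g x ↔ (x : ℕ∞) < N)
    (hconc : ∀ x : ℕ, ((x : ℕ∞) + 2 < N) →
      f (x + 2) * f x * (g (x + 1)) ^ 2 ≤ (f (x + 1)) ^ 2 * g (x + 2) * g x)
    (n : ℕ) (hn : f (n + 1) / g (n + 1) ≤ f n / g n) :
    f (n + 2) / g (n + 2) ≤ f (n + 1) / g (n + 1) := by
  by_cases hN : ((n + 2 : ℕ) : ℕ∞) < N
  · have hlt : ∀ m ≤ n + 2, (m : ℕ∞) < N := fun m hm => lt_of_le_of_lt (by exact_mod_cast hm) hN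
    have hfn := (hf_supp n).2 (hlt n (by omega))
    have hgn := (hg_supp n).2 (hlt n (by omega))
    have hgn₁ := (hg_supp (n + 1)).2 (hlt (n + 1) (by omega))
    have hgn₂ := (hg_supp (n + 2)).2 hN
    have hlog : f (n + 2) / g (n + 2) * (f n / g n) ≤ (f (n + 1) / g (n + 1)) ^ 2 := by
      rw [div_mul_div_comm, div_pow, div_le_div_iff₀ (by positivity) (by positivity)]
      linarith [hconc n (by exact_mod_cast hN)]
    refine le_of_mul_le_mul_right (hlog.trans ?_) (by positivity : 0 < f n / g n)
    rw [sq]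
    exact mul_le_mul_of_nonneg_left hn (div_nonneg (hf_nonneg _) (hg_nonneg _))
  · -- beyond the support, `f / g` is `0 / 0 = 0`
    rw [le_antisymm (not_lt.1 (mt (hg_supp (n + 2)).1 hN)) (hg_nonneg _), div_zero]
    exact div_nonneg (hf_nonneg _) (hg_nonneg _)

theorem le_of_lt_of_le_of_logConcave (f g : ℕ → ℝ) (N : ℕ∞)
    (hf_nonneg : ∀ x, 0 ≤ f x) (hg_nonneg : ∀ x, 0 ≤ g x)
    (hf_supp : ∀ x : ℕ, 0 < f x ↔ (x : ℕ∞) < N)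
    (hg_supp : ∀ x : ℕ, 0 < g x ↔ (x : ℕ∞) < N)
    (hconc : ∀ x : ℕ, ((x : ℕ∞) + 2 < N) →
      f (x + 2) * f x * (g (x + 1)) ^ 2 ≤ (f (x + 1)) ^ 2 * g (x + 2) * g x)
    (h0 : g 0 ≤ f 0) {x y : ℕ} (hx : f x < g x) (hxy : x ≤ y) : f y ≤ g y := by
  have hgx : 0 < g x := (hf_nonneg x).trans_lt hx
  have hg0 : 0 < g 0 := (hg_supp 0).2 (lt_of_le_of_lt (by simp) ((hg_supp x).1 hgx))
  have hratio : f x / g x < f 0 / g 0 :=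
    ((div_lt_one hgx).2 hx).trans_le ((one_le_div hg0).2 h0)
  have hy : f y / g y ≤ f x / g x :=
    apply_le_apply_of_lt_apply_zero (a := fun n => f n / g n)
      (div_step_down_succ f g N hf_nonneg hg_nonneg hf_supp hg_supp hconc) hratio hxy
  rcases (hg_nonneg y).lt_or_eq with hgy | hgy
  · exact ((div_lt_one hgy).1 (hy.trans_lt ((div_lt_one hgx).2 hx))).le
  · have hfy : f y ≤ 0 := not_lt.1 fun hfy => ((hg_supp y).2 ((hf_supp y).1 hfy)).ne' hgy.symm
    rwa [← hgy]

theorem stmt_4_general (f g : ℕ → ℝ) (N : ℕ∞)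
    (hf_nonneg : ∀ x, 0 ≤ f x) (hg_nonneg : ∀ x, 0 ≤ g x)
    (hf_supp : ∀ x : ℕ, 0 < f x ↔ (x : ℕ∞) < N)
    (hg_supp : ∀ x : ℕ, 0 < g x ↔ (x : ℕ∞) < N)
    (hf_sum : ∑' x : ℕ, f x = 1) (hg_sum : ∑' x : ℕ, g x = 1)
    (hconc : ∀ x : ℕ, ((x : ℕ∞) + 2 < N) →
      f (x + 2) * f x * (g (x + 1)) ^ 2 ≤ (f (x + 1)) ^ 2 * g (x + 2) * g x) :
    (∀ k : ℕ, (∑' x : ℕ, if k < x then f x else 0) ≤ ∑' x : ℕ, if k < x then g x else 0)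
      ↔ g 0 ≤ f 0 := by
  have hf : Summable f := by
    by_contra h
    simp [tsum_eq_zero_of_not_summable h] at hf_sum
  have hg : Summable g := by
    by_contra h
    simp [tsum_eq_zero_of_not_summable h] at hg_sum
  constructor
  · intro htail
    have h0 := htail 0
    rw [tsum_ite_lt_eq_sub hf, tsum_ite_lt_eq_sub hg, hf_sum, hg_sum] at h0
    simp only [zero_add, Finset.range_one, Finset.sum_singleton] at h0
    linarith
  · intro h0
    exact tsum_ite_lt_le_of_crossing hf hg (hf_sum.trans hg_sum.symm) fun x y hx hxy =>
      le_of_lt_of_le_of_logConcave f g N hf_nonneg hg_nonneg hf_supp hg_supp hconc h0 hx hxy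

/-- Theorem 2(1), "st" part: for discrete random variables with pmfs `f` and `g`,
both supported on `{0, 1, ..., n}` (when `N = n + 1`) or on all of `ℕ` (when `N = ⊤`),
such that `log (f x / g x)` is discretely concave on the support, the stochastic order
`X ≤_st Y` holds iff `f 0 ≥ g 0`. -/
theorem stmt_4 (f g : ℕ → ℝ) (N : ℕ∞) (hN : 0 < N)
    (hf_nonneg : ∀ x, 0 ≤ f x) (hg_nonneg : ∀ x, 0 ≤ g x)
    (hf_supp : ∀ x : ℕ, 0 < f x ↔ (x : ℕ∞) < N)
    (hg_supp : ∀ x : ℕ, 0 < g x ↔ (x : ℕ∞) < N)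
    (hf_sum : ∑' x : ℕ, f x = 1) (hg_sum : ∑' x : ℕ, g x = 1)
    (hconc : ∀ x : ℕ, ((x : ℕ∞) + 2 < N) →
      f (x + 2) * f x * (g (x + 1)) ^ 2 ≤ (f (x + 1)) ^ 2 * g (x + 2) * g x) :
    (∀ k : ℕ, (∑' x : ℕ, if k < x then f x else 0) ≤ ∑' x : ℕ, if k < x then g x else 0)
      ↔ g 0 ≤ f 0 :=
  stmt_4_general f g N hf_nonneg hg_nonneg hf_supp hg_supp hf_sum hg_sum hconc
end

section
/- Let X and Y be discrete random variables with pmfs f and g, both supported on {0,1,...,n}, such that log(f(x)/g(x)) is concave on the support. If X ≤_st Y then X ≤_hr Y, i.e., f(k)/Pr(X ≥ k) ≥ g(k)/Pr(Y ≥ k) for all k in the support. -/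
/-!
Write `r = f / g`; the concavity hypothesis says that `r` is log-concave on `{0, …, n}`, so once
`r` fails to increase it keeps decreasing. If `g k ≤ f k`, the tail comparison coming from
`X ≤_st Y` already gives the claim. Otherwise `r k < 1`. If `r` does not increase at `k`, then
`r ≤ r k` on `[k, n]`, and summing `g k * f x ≤ f k * g x` over the tail gives the claim. If it
does increase at `k`, then `r` increases on `[0, k]`, so `f < g` there, which contradicts
`Pr(X ≤ k) ≥ Pr(Y ≤ k)`.
-/

open Finset

section LogConcave

variable {r : ℕ → ℝ} {n : ℕ}

lemma antitoneOn_Icc_of_logConcave (hpos : ∀ x ≤ n, 0 < r x)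
    (hlc : ∀ x, x + 2 ≤ n → r (x + 2) * r x ≤ r (x + 1) ^ 2) {k : ℕ}
    (hk : r (k + 1) ≤ r k) : AntitoneOn r (Set.Icc k n) := by
  have step : ∀ x, k ≤ x → x + 1 ≤ n → r (x + 1) ≤ r x := by
    intro x hkx
    induction x, hkx using Nat.le_induction with
    | base => exact fun _ => hk
    | succ x hkx ih =>
      intro hx
      have hdesc := ih (by omega)
      have hx0 := hpos x (by omega)
      have hx1 := hpos (x + 1) (by omega)
      have hlcx := hlc x hx
      -- `r (x+2) * r x ≤ r (x+1) ^ 2 ≤ r (x+1) * r x`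
      nlinarith
  exact antitoneOn_of_add_one_le Set.ordConnected_Icc fun a _ ha ha1 => step a ha.1 ha1.2

lemma monotoneOn_Iic_of_logConcave (hpos : ∀ x ≤ n, 0 < r x)
    (hlc : ∀ x, x + 2 ≤ n → r (x + 2) * r x ≤ r (x + 1) ^ 2) {k : ℕ} (hkn : k + 1 ≤ n)
    (hk : r k ≤ r (k + 1)) : MonotoneOn r (Set.Iic k) := by
  have step : ∀ x ≤ k, r x ≤ r (x + 1) := fun x hxk => by
    refine Nat.decreasingInduction (motive := fun y _ => r y ≤ r (y + 1)) ?_ hk hxk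
    intro y hyk hasc
    have hy0 := hpos y (by omega)
    have hy1 := hpos (y + 1) (by omega)
    have hlcy := hlc y (by omega)
    -- `r y * r (y+1) ≤ r y * r (y+2) ≤ r (y+1) ^ 2`
    nlinarith
  exact monotoneOn_of_le_add_one Set.ordConnected_Iic fun a _ ha _ => step a ha

lemma logConcave_div {f g : ℕ → ℝ} (hg : ∀ x ≤ n, 0 < g x)
    (hconc : ∀ x, x + 2 ≤ n →
      f (x + 2) * f x * g (x + 1) ^ 2 ≤ f (x + 1) ^ 2 * g (x + 2) * g x) :
    ∀ x, x + 2 ≤ n → (f / g) (x + 2) * (f / g) x ≤ (f / g) (x + 1) ^ 2 := fun x hx => by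
  have := hg x (by omega)
  have := hg (x + 1) (by omega)
  have := hg (x + 2) hx
  simp only [Pi.div_apply]
  rw [div_mul_div_comm, div_pow, div_le_div_iff₀ (by positivity) (by positivity)]
  linarith [hconc x hx]

end LogConcave

lemma sum_range_add_sum_Icc {M : Type*} [AddCommMonoid M] (f : ℕ → M) {k n : ℕ}
    (hk : k ≤ n + 1) : ∑ x ∈ range k, f x + ∑ x ∈ Icc k n, f x = ∑ x ∈ range (n + 1), f x := by
  rw [← Ico_add_one_right_eq_Icc, sum_range_add_sum_Ico _ hk]

section Tails

variable {f g : ℕ → ℝ} {n : ℕ}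

lemma sum_range_le_of_sum_Ioc_le
    (htot : ∑ x ∈ range (n + 1), f x = ∑ x ∈ range (n + 1), g x)
    (hst : ∀ k, ∑ x ∈ Ioc k n, f x ≤ ∑ x ∈ Ioc k n, g x) {k : ℕ} (hk : k ≤ n + 1) :
    ∑ x ∈ range k, g x ≤ ∑ x ∈ range k, f x := by
  cases k with
  | zero => simp
  | succ j =>
    have hf := sum_range_add_sum_Icc f hk
    have hg := sum_range_add_sum_Icc g hk
    rw [Icc_add_one_left_eq_Ioc] at hf hg
    linarith [hst j]

lemma sum_Icc_le_of_sum_Ioc_le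
    (htot : ∑ x ∈ range (n + 1), f x = ∑ x ∈ range (n + 1), g x)
    (hst : ∀ k, ∑ x ∈ Ioc k n, f x ≤ ∑ x ∈ Ioc k n, g x) {k : ℕ} (hk : k ≤ n + 1) :
    ∑ x ∈ Icc k n, f x ≤ ∑ x ∈ Icc k n, g x := by
  linarith [sum_range_add_sum_Icc f hk, sum_range_add_sum_Icc g hk,
    sum_range_le_of_sum_Ioc_le htot hst hk]

lemma mul_sum_Icc_le_of_div_le {k : ℕ} (hg : ∀ x ≤ n, 0 < g x)
    (hratio : ∀ x ∈ Icc k n, f x / g x ≤ f k / g k) (hk : k ≤ n) :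
    g k * ∑ x ∈ Icc k n, f x ≤ f k * ∑ x ∈ Icc k n, g x := by
  rw [mul_sum, mul_sum]
  refine sum_le_sum fun x hx => ?_
  have h := (div_le_div_iff₀ (hg x (mem_Icc.1 hx).2) (hg k hk)).1 (hratio x hx)
  linarith

end Tails

/-- Theorem 2(1), "hr" part: for discrete random variables with pmfs `f` and `g`,
both supported exactly on `{0, 1, ..., n}`, such that `log (f x / g x)` is discretely
concave on the support, the stochastic order `X ≤_st Y` implies the hazard rate
order `X ≤_hr Y`. -/
theorem stmt_6 (n : ℕ) (f g : ℕ → ℝ)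
    (hf_nonneg : ∀ x, 0 ≤ f x) (hg_nonneg : ∀ x, 0 ≤ g x)
    (hf_supp : ∀ x : ℕ, 0 < f x ↔ x ≤ n)
    (hg_supp : ∀ x : ℕ, 0 < g x ↔ x ≤ n)
    (hf_sum : ∑ x ∈ Finset.range (n + 1), f x = 1)
    (hg_sum : ∑ x ∈ Finset.range (n + 1), g x = 1)
    (hconc : ∀ x : ℕ, x + 2 ≤ n →
      f (x + 2) * f x * (g (x + 1)) ^ 2 ≤ (f (x + 1)) ^ 2 * g (x + 2) * g x)
    (hst : ∀ k : ℕ, ∑ x ∈ Finset.Ioc k n, f x ≤ ∑ x ∈ Finset.Ioc k n, g x) :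
    ∀ k : ℕ, k ≤ n →
      g k / (∑ x ∈ Finset.Icc k n, g x) ≤ f k / (∑ x ∈ Finset.Icc k n, f x) := by
  intro k hk
  have htot : ∑ x ∈ range (n + 1), f x = ∑ x ∈ range (n + 1), g x := hf_sum.trans hg_sum.symm
  have hg : ∀ x ≤ n, 0 < g x := fun x => (hg_supp x).2
  have hfk := (hf_supp k).2 hk
  have hgk := hg k hk
  have hF : 0 < ∑ x ∈ Icc k n, f x := sum_pos' (fun x _ => hf_nonneg x) ⟨k, by simpa, hfk⟩
  have hG : 0 < ∑ x ∈ Icc k n, g x := sum_pos' (fun x _ => hg_nonneg x) ⟨k, by simpa, hgk⟩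
  rw [div_le_div_iff₀ hG hF]
  by_cases hgf : g k ≤ f k
  · exact mul_le_mul hgf (sum_Icc_le_of_sum_Ioc_le htot hst (by omega)) hF.le hfk.le
  have hpos : ∀ x ≤ n, 0 < (f / g) x := fun x hx => div_pos ((hf_supp x).2 hx) (hg x hx)
  have hlc := logConcave_div hg hconc
  rcases le_or_gt ((f / g) (k + 1)) ((f / g) k) with hdesc | hasc
  · have hanti := antitoneOn_Icc_of_logConcave hpos hlc hdesc
    exact mul_sum_Icc_le_of_div_le hg
      (fun x hx => hanti ⟨le_rfl, hk⟩ (mem_Icc.1 hx) (mem_Icc.1 hx).1) hk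
  · have hkn : k + 1 ≤ n := (hf_supp _).1 <| by
      rcases div_pos_iff.1 ((hpos k hk).trans hasc) with h | h
      exacts [h.1, absurd h.1 (hf_nonneg _).not_gt]
    have hmono := monotoneOn_Iic_of_logConcave hpos hlc hkn hasc.le
    have hrk : (f / g) k < 1 := (div_lt_one hgk).2 (not_le.1 hgf)
    have hlt : ∀ x ∈ range (k + 1), f x < g x := fun x hx => by
      have hxk : x ≤ k := Nat.lt_succ_iff.1 (mem_range.1 hx)
      exact (div_lt_one (hg x (by omega))).1 ((hmono hxk Set.self_mem_Iic hxk).trans_lt hrk)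
    exact absurd (sum_range_le_of_sum_Ioc_le htot hst (k := k + 1) (by omega))
      (sum_lt_sum_of_nonempty nonempty_range_add_one hlt).not_ge
end

section
/- Let B_1,...,B_n be independent Bernoulli random variables with parameters p_1,...,p_n ∈ (0,1), X = B_1 + ... + B_n, and Y ~ Binomial(n, p) with p ∈ (0,1). Then X ≤_lr Y (the ratio Pr(X=k)/Pr(Y=k) is nonincreasing in k on {0,...,n}) if and only if p ≥ 1 − n / (∑_{i=1}^n (1−p_i)^{-1}). -/
/-!
With `xᵢ = pᵢ / (1 - pᵢ)` one has `Pr(X = k) = (∏ᵢ (1 - pᵢ)) · eₖ(x)`, `eₖ` the elementary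
symmetric polynomial, so the likelihood ratio drops from `k` to `k + 1` iff
`(k + 1)(1 - q) eₖ₊₁(x) ≤ (n - k) q eₖ(x)`. At `k = 0` this is the criterion
`(1 - q) ∑ᵢ xᵢ ≤ n q`. Conversely the criterion gives every step through the inequality
`n (k + 1) eₖ₊₁ ≤ (n - k) e₁ eₖ`, i.e. `Eₖ₊₁ ≤ E₁ Eₖ` for the normalised means
`Eₖ = eₖ / C(n, k)`.
-/

open Finset

/-- The pmf of `X = B₁ + ⋯ + Bₙ`, a sum of independent Bernoulli(pᵢ) random
variables (the Poisson-binomial distribution). -/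
noncomputable def poissonBinomialPMF (n : ℕ) (p : Fin n → ℝ) (k : ℕ) : ℝ :=
  ∑ S ∈ Finset.powersetCard k (Finset.univ : Finset (Fin n)),
    (∏ i ∈ S, p i) * ∏ i ∈ Finset.univ \ S, (1 - p i)

/-- The pmf of the binomial distribution with parameters `n` and `p`. -/
noncomputable def binomialPMF (n : ℕ) (p : ℝ) (k : ℕ) : ℝ :=
  (n.choose k : ℝ) * p ^ k * (1 - p) ^ (n - k)

open MvPolynomial

theorem Finset.sum_sum_sub_mul_self_nonneg {σ R : Type*} [CommRing R] [LinearOrder R]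
    [IsStrictOrderedRing R] (s : Finset σ) (y : σ → R) :
    0 ≤ ∑ j ∈ s, ∑ i ∈ s, (y j - y i) * y j := by
  have hexpand :
      ∑ j ∈ s, ∑ i ∈ s, (y j - y i) * y j = #s * ∑ i ∈ s, y i ^ 2 - (∑ i ∈ s, y i) ^ 2 := by
    simp only [sub_mul, sum_sub_distrib, sum_const, nsmul_eq_mul, ← sum_mul, ← mul_sum, sq]
  rw [hexpand, sub_nonneg]
  exact sq_sum_le_card_mul_sum_sq

theorem MvPolynomial.eval_esymm {σ R : Type*} [Fintype σ] [CommSemiring R] (x : σ → R) (k : ℕ) :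
    eval x (esymm σ R k) = ∑ S ∈ powersetCard k univ, ∏ i ∈ S, x i := by
  simp [esymm, map_sum, map_prod]

section

variable {σ : Type*} [DecidableEq σ]

theorem Finset.sum_powersetCard_succ_sum_mem {M : Type*} [AddCommMonoid M] (s : Finset σ) (k : ℕ)
    (F : Finset σ → σ → M) :
    ∑ S ∈ s.powersetCard (k + 1), ∑ j ∈ S, F S j =
      ∑ R ∈ s.powersetCard k, ∑ j ∈ s \ R, F (insert j R) j := by
  rw [sum_sigma', sum_sigma']
  apply sum_bij' (fun x _ => ⟨x.1.erase x.2, x.2⟩) (fun x _ => ⟨insert x.2 x.1, x.2⟩)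
  all_goals rintro ⟨S, j⟩ h; simp only [mem_sigma, mem_powersetCard, mem_sdiff] at h
  all_goals grind [insert_erase, erase_insert]

variable [Fintype σ] {R : Type*}

theorem MvPolynomial.succ_mul_eval_esymm_succ [CommSemiring R] (x : σ → R) (k : ℕ) :
    (k + 1) * eval x (esymm σ R (k + 1)) =
      ∑ S ∈ powersetCard k univ, (∑ i ∈ univ \ S, x i) * ∏ i ∈ S, x i := by
  have hcount : ∀ T ∈ powersetCard (k + 1) (univ : Finset σ),
      (k + 1) * ∏ i ∈ T, x i = ∑ j ∈ T, x j * ∏ i ∈ T.erase j, x i := by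
    intro T hT
    rw [sum_congr rfl fun j hj => mul_prod_erase T x hj, sum_const, mem_powersetCard_univ.1 hT,
      nsmul_eq_mul]
    push_cast; rfl
  rw [eval_esymm, mul_sum, sum_congr rfl hcount, sum_powersetCard_succ_sum_mem]
  refine sum_congr rfl fun S _ => ?_
  rw [sum_mul]
  exact sum_congr rfl fun j hj => by rw [erase_insert (mem_sdiff.1 hj).2]

variable [CommRing R] [LinearOrder R] [IsStrictOrderedRing R]

/-- Grouping the sets `S = insert j R`, the difference of the two sides becomes
`∑_R x^R (#Rᶜ ∑_{Rᶜ} x² - (∑_{Rᶜ} x)²)`, which is nonnegative by Cauchy–Schwarz. -/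
theorem mul_sum_powersetCard_sum_sdiff_le (x : σ → R) (hx : ∀ i, 0 ≤ x i) {k : ℕ}
    (hk : k ≤ Fintype.card σ) :
    k * ∑ S ∈ powersetCard k univ, (∑ i ∈ univ \ S, x i) * ∏ i ∈ S, x i ≤
      (Fintype.card σ - k) * ∑ S ∈ powersetCard k univ, (∑ i ∈ S, x i) * ∏ i ∈ S, x i := by
  have hsplit : ∀ S ∈ powersetCard k (univ : Finset σ),
      (Fintype.card σ - k) * ((∑ i ∈ S, x i) * ∏ i ∈ S, x i) -
          k * ((∑ i ∈ univ \ S, x i) * ∏ i ∈ S, x i) =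
        ∑ j ∈ S, (∑ i ∈ univ \ S, (x j - x i)) * ∏ i ∈ S, x i := by
    intro S hS
    have hcard : (#(univ \ S) : R) = Fintype.card σ - k := by
      rw [card_sdiff_of_subset (subset_univ S), card_univ, mem_powersetCard_univ.1 hS,
        Nat.cast_sub hk]
    simp only [← sum_mul, sum_sub_distrib, sum_const, nsmul_eq_mul, hcard,
      mem_powersetCard_univ.1 hS, ← mul_sum]
    ring
  rw [← sub_nonneg, mul_sum, mul_sum, ← sum_sub_distrib, sum_congr rfl hsplit]
  rcases k with _ | k
  · simp
  rw [sum_powersetCard_succ_sum_mem]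
  refine sum_nonneg fun S _ => ?_
  have hterm : ∀ j ∈ univ \ S, (∑ i ∈ univ \ insert j S, (x j - x i)) * ∏ i ∈ insert j S, x i =
      (∑ i ∈ univ \ S, (x j - x i) * x j) * ∏ i ∈ S, x i := by
    intro j hj
    rw [sdiff_insert, prod_insert (mem_sdiff.1 hj).2, ← sum_mul,
      sum_erase _ (by rw [sub_self])]
    ring
  rw [sum_congr rfl hterm, ← sum_mul]
  exact mul_nonneg (sum_sum_sub_mul_self_nonneg _ x) (prod_nonneg fun i _ => hx i)

theorem card_mul_succ_mul_eval_esymm_succ_le (x : σ → R) (hx : ∀ i, 0 ≤ x i) {k : ℕ}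
    (hk : k ≤ Fintype.card σ) :
    Fintype.card σ * (k + 1) * eval x (esymm σ R (k + 1)) ≤
      (Fintype.card σ - k) * ((∑ i, x i) * eval x (esymm σ R k)) := by
  have hsum : (∑ i, x i) * eval x (esymm σ R k) =
      ∑ S ∈ powersetCard k univ, (∑ i ∈ univ \ S, x i) * ∏ i ∈ S, x i +
        ∑ S ∈ powersetCard k univ, (∑ i ∈ S, x i) * ∏ i ∈ S, x i := by
    rw [eval_esymm, mul_sum, ← sum_add_distrib]
    exact sum_congr rfl fun S _ => by rw [← add_mul, sum_sdiff (subset_univ S)]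
  linear_combination mul_sum_powersetCard_sum_sdiff_le x hx hk +
    (Fintype.card σ : R) * succ_mul_eval_esymm_succ x k - (Fintype.card σ - k : R) * hsum

theorem succ_mul_eval_esymm_succ_le_of_mul_sum_le (x : σ → R) (hx : ∀ i, 0 ≤ x i) {a b : R}
    (ha : 0 ≤ a) (hab : a * ∑ i, x i ≤ Fintype.card σ * b) {k : ℕ} (hk : k < Fintype.card σ) :
    (k + 1) * a * eval x (esymm σ R (k + 1)) ≤ (Fintype.card σ - k) * b * eval x (esymm σ R k) := by
  have hcard : (0 : R) < Fintype.card σ := by exact_mod_cast hk.pos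
  have hnk : (0 : R) ≤ Fintype.card σ - k := sub_nonneg.2 (by exact_mod_cast hk.le)
  have he : 0 ≤ eval x (esymm σ R k) := by
    rw [eval_esymm]; exact sum_nonneg fun S _ => prod_nonneg fun i _ => hx i
  refine le_of_mul_le_mul_left ?_ hcard
  calc (Fintype.card σ : R) * ((k + 1) * a * eval x (esymm σ R (k + 1)))
      = a * (Fintype.card σ * (k + 1) * eval x (esymm σ R (k + 1))) := by ring
    _ ≤ a * ((Fintype.card σ - k) * ((∑ i, x i) * eval x (esymm σ R k))) :=
      mul_le_mul_of_nonneg_left (card_mul_succ_mul_eval_esymm_succ_le x hx hk.le) ha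
    _ = (Fintype.card σ - k) * eval x (esymm σ R k) * (a * ∑ i, x i) := by ring
    _ ≤ (Fintype.card σ - k) * eval x (esymm σ R k) * (Fintype.card σ * b) :=
      mul_le_mul_of_nonneg_left hab (mul_nonneg hnk he)
    _ = Fintype.card σ * ((Fintype.card σ - k) * b * eval x (esymm σ R k)) := by ring

end

theorem Nat.antitoneOn_Iic_iff {α : Type*} [Preorder α] {f : ℕ → α} {n : ℕ} :
    AntitoneOn f (Set.Iic n) ↔ ∀ k < n, f (k + 1) ≤ f k :=
  ⟨fun h k hk => h (Set.mem_Iic.2 hk.le) (Set.mem_Iic.2 hk) k.le_succ,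
    fun h => antitoneOn_of_add_one_le Set.ordConnected_Iic fun k _ _ hk => h k hk⟩

theorem one_sub_div_sum_inv_le_iff {ι : Type*} [Fintype ι] [Nonempty ι] {p : ι → ℝ}
    (hp : ∀ i, p i < 1) (q : ℝ) :
    1 - Fintype.card ι / ∑ i, (1 - p i)⁻¹ ≤ q ↔
      (1 - q) * ∑ i, p i / (1 - p i) ≤ Fintype.card ι * q := by
  have hsum : ∑ i, p i / (1 - p i) = ∑ i, (1 - p i)⁻¹ - Fintype.card ι := by
    rw [← card_univ, ← nsmul_one, ← sum_const, ← sum_sub_distrib]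
    refine sum_congr rfl fun i _ => ?_
    field_simp [(sub_pos.2 (hp i)).ne']
    ring
  have hpos : 0 < ∑ i, (1 - p i)⁻¹ :=
    sum_pos (fun i _ => inv_pos.2 (sub_pos.2 (hp i))) univ_nonempty
  rw [hsum, sub_le_comm, le_div_iff₀ hpos]
  constructor <;> intro h <;> linarith

theorem poissonBinomialPMF_eq_prod_mul_eval_esymm {n : ℕ} (p : Fin n → ℝ) (hp : ∀ i, p i ≠ 1)
    (k : ℕ) :
    poissonBinomialPMF n p k =
      (∏ i, (1 - p i)) * eval (fun i => p i / (1 - p i)) (esymm (Fin n) ℝ k) := by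
  rw [poissonBinomialPMF, eval_esymm, mul_sum]
  refine sum_congr rfl fun S _ => ?_
  rw [← prod_sdiff (subset_univ S), mul_comm (∏ i ∈ S, _), mul_assoc, ← prod_mul_distrib]
  congr 2 with i
  field_simp [sub_ne_zero.2 (hp i).symm]

theorem binomialPMF_pos {n k : ℕ} {q : ℝ} (hq : q ∈ Set.Ioo (0 : ℝ) 1) (hk : k ≤ n) :
    0 < binomialPMF n q k := by
  have hchoose := Nat.choose_pos hk
  have hq1 := sub_pos.2 hq.2
  have hq0 := hq.1
  unfold binomialPMF
  positivity

theorem succ_mul_binomialPMF_succ {n k : ℕ} (q : ℝ) (hk : k < n) :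
    (k + 1) * (1 - q) * binomialPMF n q (k + 1) = (n - k) * q * binomialPMF n q k := by
  have hchoose : (n.choose (k + 1) : ℝ) * (k + 1) = n.choose k * (n - k) := by
    rw [← Nat.cast_sub hk.le]
    exact_mod_cast Nat.choose_succ_right_eq n k
  have hpow : (1 - q) ^ (n - k) = (1 - q) ^ (n - (k + 1)) * (1 - q) := by
    rw [← pow_succ, Nat.sub_add_eq, Nat.sub_add_cancel (Nat.sub_pos_of_lt hk)]
  rw [binomialPMF, binomialPMF, hpow]
  linear_combination q ^ (k + 1) * (1 - q) ^ (n - (k + 1)) * (1 - q) * hchoose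

theorem div_binomialPMF_succ_le_div_iff {n k : ℕ} {q : ℝ} (hq : q ∈ Set.Ioo (0 : ℝ) 1)
    (hk : k < n) (a b : ℝ) :
    a / binomialPMF n q (k + 1) ≤ b / binomialPMF n q k ↔
      (k + 1) * (1 - q) * a ≤ (n - k) * q * b := by
  have hc : (0 : ℝ) < (k + 1) * (1 - q) := by have := sub_pos.2 hq.2; positivity
  have hB := binomialPMF_pos hq hk.le
  have hrhs : (k + 1) * (1 - q) * (b * binomialPMF n q (k + 1)) =
      (n - k) * q * b * binomialPMF n q k := by
    linear_combination b * succ_mul_binomialPMF_succ q hk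
  rw [div_le_div_iff₀ (binomialPMF_pos hq hk) hB, ← mul_le_mul_iff_right₀ hc, hrhs, ← mul_assoc,
    mul_le_mul_iff_left₀ hB]

/-- Example 0, "lr" part: if `X = B₁ + ⋯ + Bₙ` is a sum of independent Bernoulli(pᵢ)
variables, `pᵢ ∈ (0,1)`, and `Y ~ Binomial(n, p)`, `p ∈ (0,1)`, then `X ≤_lr Y`
(the pmf ratio is nonincreasing on `{0, ..., n}`) iff
`p ≥ 1 − n / ∑ᵢ (1 − pᵢ)⁻¹`. -/
theorem stmt_8 (n : ℕ) (hn : 0 < n) (p : Fin n → ℝ) (q : ℝ)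
    (hp : ∀ i, p i ∈ Set.Ioo (0 : ℝ) 1) (hq : q ∈ Set.Ioo (0 : ℝ) 1) :
    AntitoneOn (fun k : ℕ => poissonBinomialPMF n p k / binomialPMF n q k)
        (Set.Iic n) ↔
      1 - (n : ℝ) / (∑ i, (1 - p i)⁻¹) ≤ q := by
  set x : Fin n → ℝ := fun i => p i / (1 - p i)
  have hx : ∀ i, 0 ≤ x i := fun i => div_nonneg (hp i).1.le (sub_nonneg.2 (hp i).2.le)
  have hC : 0 < ∏ i, (1 - p i) := prod_pos fun i _ => sub_pos.2 (hp i).2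
  have hstep : ∀ k < n, poissonBinomialPMF n p (k + 1) / binomialPMF n q (k + 1) ≤
      poissonBinomialPMF n p k / binomialPMF n q k ↔
        (k + 1) * (1 - q) * eval x (esymm (Fin n) ℝ (k + 1)) ≤
          (n - k) * q * eval x (esymm (Fin n) ℝ k) := by
    intro k hk
    simp only [div_binomialPMF_succ_le_div_iff hq hk,
      poissonBinomialPMF_eq_prod_mul_eval_esymm p (fun i => (hp i).2.ne), mul_left_comm _ (∏ i, _)]
    exact mul_le_mul_iff_right₀ hC
  have : Nonempty (Fin n) := ⟨⟨0, hn⟩⟩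
  have hcrit := one_sub_div_sum_inv_le_iff (fun i => (hp i).2) q
  rw [Fintype.card_fin] at hcrit
  rw [Nat.antitoneOn_Iic_iff, hcrit]
  constructor
  · intro h
    simpa using (hstep 0 hn).1 (h 0 hn)
  · intro h k hk
    have := succ_mul_eval_esymm_succ_le_of_mul_sum_le x hx (sub_nonneg.2 hq.2.le)
      (by simpa using h) (by simpa using hk)
    exact (hstep k hk).2 (by simpa using this)
end

section
/- Let X ~ Poisson(λ) with λ > 0 and let Y be a mixture of Poisson(t) distributions with respect to a probability measure μ on t ∈ (0,∞). Then X ≤_st Y if and only if ∫ e^{−t} dμ(t) ≤ e^{−λ}. -/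
/-!
If `N ~ Poisson t`, then `d/dt P(N > k) = t^k e^{-t} / k!`. In the variable `u = e^{-t}` the tail
`P(N > k)` is therefore a convex function of `u`, with slope `-t^k / k!`. Since it lies above its
tangent at `u = e^{-λ}`, integrating against `μ` shows that `∫ e^{-t} dμ ≤ e^{-λ}` makes every tail
of the mixture at least the corresponding tail of `Poisson λ`. Conversely, the case `k = 0` is the
inequality `1 - e^{-λ} ≤ 1 - ∫ e^{-t} dμ`.
-/

open MeasureTheory Set Real Finset

noncomputable def expPartialSum (n : ℕ) (t : ℝ) : ℝ := ∑ i ∈ range n, t ^ i / i.factorial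

theorem hasDerivAt_expPartialSum_succ (n : ℕ) (t : ℝ) :
    HasDerivAt (expPartialSum (n + 1)) (expPartialSum n t) t := by
  induction n with
  | zero =>
    have : expPartialSum 1 = fun _ => 1 := by ext; simp [expPartialSum]
    simpa [this, expPartialSum] using hasDerivAt_const t (1 : ℝ)
  | succ n ih =>
    have hterm :
        HasDerivAt (fun s : ℝ => s ^ (n + 1) / (n + 1).factorial) (t ^ n / n.factorial) t := by
      refine ((hasDerivAt_pow (n + 1) t).div_const _).congr_deriv ?_
      push_cast [Nat.factorial_succ, Nat.add_sub_cancel]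
      field_simp
    have hsplit : expPartialSum (n + 2) =
        fun s => expPartialSum (n + 1) s + s ^ (n + 1) / (n + 1).factorial :=
      funext fun _ => sum_range_succ _ (n + 1)
    rw [hsplit]
    exact (ih.add hterm).congr_deriv (sum_range_succ _ n).symm

theorem hasSum_pow_mul_exp_neg_div_factorial (t : ℝ) :
    HasSum (fun x : ℕ => t ^ x * exp (-t) / x.factorial) 1 := by
  have h := (NormedSpace.expSeries_div_hasSum_exp t).mul_right (exp (-t))
  rw [← Real.exp_eq_exp_ℝ, ← Real.exp_add, add_neg_cancel, Real.exp_zero] at h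
  exact h.congr_fun fun x => by ring

/-- `P(N > k)` for `N ~ Poisson t`. -/
noncomputable def poissonTail (k : ℕ) (t : ℝ) : ℝ :=
  ∑' x : ℕ, if k < x then t ^ x * exp (-t) / x.factorial else 0

theorem hasSum_poissonTail (k : ℕ) (t : ℝ) :
    HasSum (fun x : ℕ => if k < x then t ^ x * exp (-t) / x.factorial else 0)
      (1 - exp (-t) * expPartialSum (k + 1) t) := by
  have hhead : HasSum (fun x : ℕ => if k < x then 0 else t ^ x * exp (-t) / x.factorial)
      (exp (-t) * expPartialSum (k + 1) t) := by
    have h : HasSum (fun x : ℕ => if k < x then 0 else t ^ x * exp (-t) / x.factorial) _ :=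
      hasSum_sum_of_ne_finset_zero (s := range (k + 1)) fun x hx => if_pos (by simpa using hx)
    convert h using 1
    rw [expPartialSum, mul_sum]
    refine sum_congr rfl fun x hx => ?_
    rw [if_neg (by simpa [Nat.lt_succ_iff] using hx)]
    ring
  refine ((hasSum_pow_mul_exp_neg_div_factorial t).sub hhead).congr_fun fun x => ?_
  split_ifs <;> ring

theorem poissonTail_eq (k : ℕ) (t : ℝ) :
    poissonTail k t = 1 - exp (-t) * expPartialSum (k + 1) t :=
  (hasSum_poissonTail k t).tsum_eq

theorem poissonTail_zero (t : ℝ) : poissonTail 0 t = 1 - exp (-t) := by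
  simp [poissonTail_eq, expPartialSum]

theorem hasDerivAt_poissonTail (k : ℕ) (t : ℝ) :
    HasDerivAt (poissonTail k) (t ^ k * exp (-t) / k.factorial) t := by
  have hexp : HasDerivAt (fun s => exp (-s)) (-exp (-t)) t := by
    simpa using (hasDerivAt_neg t).exp
  have h := (hexp.mul (hasDerivAt_expPartialSum_succ k t)).const_sub 1
  rw [funext (poissonTail_eq k)]
  refine h.congr_deriv ?_
  rw [expPartialSum, sum_range_succ, expPartialSum]
  ring

theorem poissonTail_nonneg (k : ℕ) {t : ℝ} (ht : 0 ≤ t) : 0 ≤ poissonTail k t :=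
  tsum_nonneg fun x => by split_ifs <;> positivity

theorem poissonTail_le_one (k : ℕ) {t : ℝ} (ht : 0 ≤ t) : poissonTail k t ≤ 1 := by
  rw [poissonTail_eq, sub_le_self_iff, expPartialSum]
  positivity

theorem continuous_poissonTail (k : ℕ) : Continuous (poissonTail k) :=
  continuous_iff_continuousAt.2 fun t => (hasDerivAt_poissonTail k t).continuousAt

theorem poissonTail_add_mul_exp_neg_le (k : ℕ) {lam t : ℝ} (hlam : 0 ≤ lam) (ht : 0 ≤ t) :
    poissonTail k lam + lam ^ k / k.factorial * exp (-lam) ≤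
      poissonTail k t + lam ^ k / k.factorial * exp (-t) := by
  set c : ℝ := lam ^ k / k.factorial
  set G := fun s => poissonTail k s + c * exp (-s)
  have hG : ∀ s, HasDerivAt G (exp (-s) * (s ^ k / k.factorial - c)) s := fun s => by
    refine ((hasDerivAt_poissonTail k s).add ((hasDerivAt_neg s).exp.const_mul c)).congr_deriv ?_
    ring
  have hderiv : ∀ s, deriv G s = exp (-s) * (s ^ k / k.factorial - c) := fun s => (hG s).deriv
  have hmin : IsMinOn G (Ici 0) lam := by
    refine isMinOn_Ici_of_deriv (hG 0).continuousAt (hG lam).continuousAt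
      (fun s _ => (hG s).differentiableAt.differentiableWithinAt)
      (fun s _ => (hG s).differentiableAt.differentiableWithinAt) (fun s hs => ?_) (fun s hs => ?_)
    · rw [hderiv]
      have : s ^ k / k.factorial ≤ c :=
        div_le_div_of_nonneg_right (pow_le_pow_left₀ hs.1.le hs.2.le k) (by positivity)
      exact mul_nonpos_of_nonneg_of_nonpos (exp_pos _).le (by linarith)
    · rw [hderiv]
      have : c ≤ s ^ k / k.factorial :=
        div_le_div_of_nonneg_right (pow_le_pow_left₀ hlam (le_of_lt hs) k) (by positivity)
      exact mul_nonneg (exp_pos _).le (by linarith)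
  exact hmin ht

theorem hasSum_integral_of_nonneg {α ι : Type*} [MeasurableSpace α] [Countable ι] {μ : Measure α}
    {F : ι → α → ℝ} {f : α → ℝ} (hF : ∀ n, AEStronglyMeasurable (F n) μ)
    (hF₀ : ∀ n, 0 ≤ᵐ[μ] F n) (hf : Integrable f μ) (h : ∀ᵐ a ∂μ, HasSum (F · a) (f a)) :
    HasSum (fun n => ∫ a, F n a ∂μ) (∫ a, f a ∂μ) :=
  hasSum_integral_of_dominated_convergence F hF
    (fun n => (hF₀ n).mono fun _ ha => (Real.norm_of_nonneg ha).le)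
    (h.mono fun _ ha => ha.summable) (hf.congr (h.mono fun _ ha => ha.tsum_eq.symm)) h

section Mixture

variable {μ : Measure ℝ}

theorem integrable_exp_neg [IsFiniteMeasure μ] (hpos : ∀ᵐ t ∂μ, 0 ≤ t) :
    Integrable (fun t => exp (-t)) μ :=
  .of_bound (by fun_prop) 1 <| hpos.mono fun t ht => by
    rw [norm_of_nonneg (exp_pos _).le]
    exact exp_le_one_iff.2 (neg_nonpos.2 ht)

theorem integrable_poissonTail [IsFiniteMeasure μ] (hpos : ∀ᵐ t ∂μ, 0 ≤ t) (k : ℕ) :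
    Integrable (poissonTail k) μ :=
  .of_bound (continuous_poissonTail k).aestronglyMeasurable 1 <| hpos.mono fun _ ht => by
    rw [norm_of_nonneg (poissonTail_nonneg k ht)]
    exact poissonTail_le_one k ht

theorem tsum_ite_integral_eq_integral_poissonTail [IsFiniteMeasure μ] (hpos : ∀ᵐ t ∂μ, 0 ≤ t)
    (k : ℕ) :
    (∑' x : ℕ, if k < x then ∫ t, t ^ x * exp (-t) / x.factorial ∂μ else 0) =
      ∫ t, poissonTail k t ∂μ := by
  have h := hasSum_integral_of_nonneg
    (F := fun x t => if k < x then t ^ x * exp (-t) / x.factorial else 0)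
    (fun x => by split_ifs <;> fun_prop)
    (fun x => hpos.mono fun t ht => by dsimp only; split_ifs <;> positivity)
    (integrable_poissonTail hpos k) (ae_of_all _ fun t => (hasSum_poissonTail k t).summable.hasSum)
  refine (h.congr_fun fun x => ?_).tsum_eq
  split_ifs <;> simp

theorem integral_poissonTail_zero [IsProbabilityMeasure μ] (hpos : ∀ᵐ t ∂μ, 0 ≤ t) :
    ∫ t, poissonTail 0 t ∂μ = 1 - ∫ t, exp (-t) ∂μ := by
  simp_rw [poissonTail_zero]
  rw [integral_sub (integrable_const 1) (integrable_exp_neg hpos)]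
  simp

theorem poissonTail_le_integral [IsProbabilityMeasure μ] (hpos : ∀ᵐ t ∂μ, 0 ≤ t) {lam : ℝ}
    (hlam : 0 ≤ lam) (hexp : ∫ t, exp (-t) ∂μ ≤ exp (-lam)) (k : ℕ) :
    poissonTail k lam ≤ ∫ t, poissonTail k t ∂μ := by
  set c : ℝ := lam ^ k / k.factorial
  have hI := integrable_exp_neg hpos
  calc poissonTail k lam
      ≤ poissonTail k lam + c * (exp (-lam) - ∫ t, exp (-t) ∂μ) :=
        le_add_of_nonneg_right (mul_nonneg (by positivity) (sub_nonneg.2 hexp))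
    _ = ∫ t, poissonTail k lam + c * exp (-lam) - c * exp (-t) ∂μ := by
        rw [integral_sub (integrable_const _) (hI.const_mul c), integral_const_mul]
        simp only [integral_const, probReal_univ, one_smul]
        ring
    _ ≤ ∫ t, poissonTail k t ∂μ :=
        integral_mono_ae ((integrable_const _).sub (hI.const_mul c))
          (integrable_poissonTail hpos k)
          (hpos.mono fun t ht => sub_le_iff_le_add.2 (poissonTail_add_mul_exp_neg_le k hlam ht))

end Mixture

/-- Example 1, "st" part: let `X ~ Poisson(λ)`, `λ > 0`, and let `Y` be a mixture of
`Poisson(t)` distributions with respect to a probability measure `μ` on `(0, ∞)`.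
Then `X ≤_st Y` iff `∫ e^{−t} dμ(t) ≤ e^{−λ}`. -/
theorem stmt_10 (lam : ℝ) (hlam : 0 < lam)
    (μ : Measure ℝ) [IsProbabilityMeasure μ] (hμ : μ (Ioi 0)ᶜ = 0) :
    (∀ k : ℕ,
        (∑' x : ℕ, if k < x then lam ^ x * Real.exp (-lam) / x.factorial else 0) ≤
        ∑' x : ℕ, if k < x then ∫ t, t ^ x * Real.exp (-t) / x.factorial ∂μ else 0) ↔
      ∫ t, Real.exp (-t) ∂μ ≤ Real.exp (-lam) := by
  have hpos : ∀ᵐ t ∂μ, 0 ≤ t := by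
    filter_upwards [mem_ae_iff.2 hμ] with t ht using le_of_lt ht
  simp_rw [tsum_ite_integral_eq_integral_poissonTail hpos]
  refine ⟨fun h => ?_, fun h k => poissonTail_le_integral hpos hlam.le h k⟩
  have h0 : poissonTail 0 lam ≤ ∫ t, poissonTail 0 t ∂μ := h 0
  rw [integral_poissonTail_zero hpos, poissonTail_zero] at h0
  linarith
end

section
/- Let X ~ Poisson(λ) with λ > 0 and let Y be a mixture of Poisson(t) distributions with respect to a probability measure μ on (0,∞). Then X ≤_lr Y (i.e., Pr(X=x)/Pr(Y=x) is nonincreasing in x) if and only if λ ≤ (∫ t e^{−t} dμ(t)) / (∫ e^{−t} dμ(t)). -/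
/-!
Writing `m n = ∫ t ^ n e^{-t} dμ`, the pmf ratio is `e^{-λ} λ^n / m n` (the factorials
cancel), so `X ≤_lr Y` means `λ m n ≤ m (n + 1)` for every `n`. The case `n = 0` is the
stated condition, and it implies all the others: `(t ^ n - λ ^ n)(t - λ) ≥ 0` for `t, λ ≥ 0`,
and integrating it against `e^{-t} dμ` gives `m (n + 1) - λ m n ≥ λ ^ n (m 1 - λ m 0)`.
-/

open MeasureTheory Set

lemma antitone_mul_pow_div_iff {c lam : ℝ} {m : ℕ → ℝ} (hc : 0 < c) (hlam : 0 < lam)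
    (hm : ∀ n, 0 < m n) :
    Antitone (fun n => c * lam ^ n / m n) ↔ ∀ n, lam * m n ≤ m (n + 1) := by
  have hstep : ∀ n,
      c * lam ^ (n + 1) / m (n + 1) ≤ c * lam ^ n / m n ↔ lam * m n ≤ m (n + 1) := by
    intro n
    have hcl : 0 < c * lam ^ n := by positivity
    rw [div_le_div_iff₀ (hm _) (hm _), pow_succ, ← mul_assoc, mul_right_comm, mul_assoc,
      mul_le_mul_iff_right₀ hcl, mul_comm]
  exact ⟨fun h n => (hstep n).1 (h n.le_succ),
    fun h => antitone_nat_of_succ_le fun n => (hstep n).2 (h n)⟩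

lemma integral_pos_of_ae_pos {α : Type*} [MeasurableSpace α] {μ : Measure α}
    [NeZero μ] {f : α → ℝ} (hfi : Integrable f μ) (hf : ∀ᵐ x ∂μ, 0 < f x) :
    0 < ∫ x, f x ∂μ := by
  rw [integral_pos_iff_support_of_nonneg_ae (hf.mono fun _ hx => hx.le) hfi]
  have hsupp : Function.support f =ᵐ[μ] (univ : Set α) :=
    ae_eq_univ.2 (ae_iff.1 (hf.mono fun _ hx => hx.ne'))
  rw [measure_congr hsupp]
  exact Measure.measure_univ_pos.2 (NeZero.ne μ)

lemma pow_mul_exp_neg_le_factorial {t : ℝ} (ht : 0 ≤ t) (n : ℕ) :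
    t ^ n * Real.exp (-t) ≤ n.factorial := by
  have h := Real.pow_div_factorial_le_exp t ht n
  rw [div_le_iff₀ (by positivity)] at h
  rw [Real.exp_neg, ← div_eq_mul_inv, div_le_iff₀ (Real.exp_pos t), mul_comm]
  exact h

noncomputable def expMoment (μ : Measure ℝ) (n : ℕ) : ℝ :=
  ∫ t, t ^ n * Real.exp (-t) ∂μ

section expMoment

variable {μ : Measure ℝ}

lemma integrable_pow_mul_exp_neg [IsFiniteMeasure μ] (hμ : ∀ᵐ t ∂μ, 0 ≤ t) (n : ℕ) :
    Integrable (fun t => t ^ n * Real.exp (-t)) μ := by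
  refine Integrable.mono' (integrable_const (n.factorial : ℝ)) (by fun_prop) ?_
  filter_upwards [hμ] with t ht
  rw [Real.norm_of_nonneg (by positivity)]
  exact pow_mul_exp_neg_le_factorial ht n

lemma expMoment_pos [IsFiniteMeasure μ] [NeZero μ] (hμ : ∀ᵐ t ∂μ, 0 < t) (n : ℕ) :
    0 < expMoment μ n :=
  integral_pos_of_ae_pos (integrable_pow_mul_exp_neg (hμ.mono fun _ ht => ht.le) n)
    (hμ.mono fun _ ht => by positivity)

lemma pow_mul_sub_le_expMoment_succ_sub [IsFiniteMeasure μ] (hμ : ∀ᵐ t ∂μ, 0 ≤ t)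
    {lam : ℝ} (hlam : 0 ≤ lam) (n : ℕ) :
    lam ^ n * (expMoment μ 1 - lam * expMoment μ 0) ≤
      expMoment μ (n + 1) - lam * expMoment μ n := by
  have hint := integrable_pow_mul_exp_neg hμ
  have hF : ∫ t, (t ^ n - lam ^ n) * (t - lam) * Real.exp (-t) ∂μ =
      expMoment μ (n + 1) - lam * expMoment μ n -
        lam ^ n * (expMoment μ 1 - lam * expMoment μ 0) := by
    have hsplit : (fun t : ℝ => (t ^ n - lam ^ n) * (t - lam) * Real.exp (-t)) =
        fun t => t ^ (n + 1) * Real.exp (-t) - lam * (t ^ n * Real.exp (-t)) -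
          (lam ^ n * (t ^ 1 * Real.exp (-t)) - lam ^ (n + 1) * (t ^ 0 * Real.exp (-t))) := by
      funext t; ring
    have hA : Integrable (fun t : ℝ =>
        t ^ (n + 1) * Real.exp (-t) - lam * (t ^ n * Real.exp (-t))) μ :=
      (hint _).sub ((hint _).const_mul _)
    have hB : Integrable (fun t : ℝ =>
        lam ^ n * (t ^ 1 * Real.exp (-t)) - lam ^ (n + 1) * (t ^ 0 * Real.exp (-t))) μ :=
      ((hint _).const_mul _).sub ((hint _).const_mul _)
    rw [hsplit, integral_sub hA hB, integral_sub (hint _) ((hint _).const_mul _),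
      integral_sub ((hint _).const_mul _) ((hint _).const_mul _)]
    simp only [integral_const_mul, expMoment]
    ring
  have hF_nonneg : 0 ≤ ∫ t, (t ^ n - lam ^ n) * (t - lam) * Real.exp (-t) ∂μ := by
    refine integral_nonneg_of_ae ?_
    filter_upwards [hμ] with t ht
    have hsame_sign : 0 ≤ (t ^ n - lam ^ n) * (t - lam) := by
      rcases le_total t lam with h | h
      · exact mul_nonneg_of_nonpos_of_nonpos
          (sub_nonpos.2 (pow_le_pow_left₀ ht h n)) (sub_nonpos.2 h)
      · exact mul_nonneg (sub_nonneg.2 (pow_le_pow_left₀ hlam h n)) (sub_nonneg.2 h)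
    exact mul_nonneg hsame_sign (Real.exp_pos _).le
  linarith

end expMoment

/-- Example 1, "lr" part: let `X ~ Poisson(λ)`, `λ > 0`, and let `Y` be a mixture of
`Poisson(t)` distributions with respect to a probability measure `μ` on `(0, ∞)`.
Then `X ≤_lr Y` (the pmf ratio is nonincreasing in `x`) iff
`λ ≤ (∫ t e^{−t} dμ(t)) / (∫ e^{−t} dμ(t))`. -/
theorem stmt_11 (lam : ℝ) (hlam : 0 < lam)
    (μ : Measure ℝ) [IsProbabilityMeasure μ] (hμ : μ (Ioi 0)ᶜ = 0) :
    Antitone (fun x : ℕ =>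
        (lam ^ x * Real.exp (-lam) / x.factorial) /
          ∫ t, t ^ x * Real.exp (-t) / x.factorial ∂μ) ↔
      lam ≤ (∫ t, t * Real.exp (-t) ∂μ) / ∫ t, Real.exp (-t) ∂μ := by
  have hpos : ∀ᵐ t ∂μ, 0 < t := mem_ae_iff.2 hμ
  have hm := expMoment_pos hpos
  have hratio : (fun x : ℕ => (lam ^ x * Real.exp (-lam) / x.factorial) /
      ∫ t, t ^ x * Real.exp (-t) / x.factorial ∂μ) =
      fun x => Real.exp (-lam) * lam ^ x / expMoment μ x := by
    funext x
    rw [integral_div, expMoment]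
    field_simp
  have hcond : (∫ t, t * Real.exp (-t) ∂μ) / ∫ t, Real.exp (-t) ∂μ =
      expMoment μ 1 / expMoment μ 0 := by
    simp only [expMoment, pow_one, pow_zero, one_mul]
  rw [hratio, antitone_mul_pow_div_iff (Real.exp_pos _) hlam hm, hcond, le_div_iff₀ (hm 0)]
  refine ⟨fun h => by simpa using h 0, fun h n => ?_⟩
  have hstep := pow_mul_sub_le_expMoment_succ_sub (hpos.mono fun _ ht => ht.le) hlam.le n
  have hbase := mul_nonneg (pow_pos hlam n).le (sub_nonneg.2 h)
  linarith
end

section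
/- Let X ~ Binomial(n, p) with p ∈ (0,1) and let Y be a mixture of Binomial(n, t) distributions with respect to a probability measure μ on t ∈ (0,1). Then X ≤_st Y if and only if ∫ (1−t)^n dμ(t) ≤ (1−p)^n. -/
/-!
Let `S_k(t) = Pr(Binomial(n, t) > k)`. For `k = 0` the inequality `S_0(p) ≤ ∫ S_0 dμ` is the
condition itself, since `S_0(t) = 1 - (1 - t)^n`. For `k < n`, the Bernstein derivative formula
telescopes to `S_k'(t) = n C(n-1,k) t^k (1-t)^(n-1-k)`, so
`(1 - p)^k S_k(t) + C(n-1,k) p^k (1 - t)^n` has derivative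
`n C(n-1,k) (1-t)^(n-1-k) (((1-p) t)^k - (p (1-t))^k)`, of the sign of `t - p`, and is minimal on
`[0, 1]` at `t = p`. Integrating this against `μ` and using `∫ (1-t)^n dμ ≤ (1-p)^n` gives
`S_k(p) ≤ ∫ S_k dμ`.
-/

open MeasureTheory Set Polynomial

theorem derivative_sum_bernsteinPolynomial_Ioc {R : Type*} [CommRing R] {n k : ℕ} (hk : k ≤ n) :
    derivative (∑ ν ∈ Finset.Ioc k n, bernsteinPolynomial R n ν) =
      n * bernsteinPolynomial R (n - 1) k := by
  have telescope : ∀ b : ℕ → R[X], ∑ i ∈ Finset.Ico k n, (b i - b (i + 1)) = b k - b n := by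
    intro b
    rw [← neg_sub (b n), ← Finset.sum_Ico_sub b hk, ← Finset.sum_neg_distrib]
    simp only [neg_sub]
  rw [← Finset.Ico_add_one_add_one_eq_Ioc, ← Finset.sum_Ico_add', derivative_sum]
  simp only [bernsteinPolynomial.derivative_succ, ← Finset.mul_sum, telescope]
  rcases Nat.eq_zero_or_pos n with rfl | hn
  · simp
  · rw [bernsteinPolynomial.eq_zero_of_lt R (by omega : n - 1 < n)]
    ring

noncomputable def binomialTail (n k : ℕ) (t : ℝ) : ℝ :=
  ∑ x ∈ Finset.Ioc k n, (n.choose x : ℝ) * t ^ x * (1 - t) ^ (n - x)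

theorem binomialTail_eq_eval (n k : ℕ) (t : ℝ) :
    binomialTail n k t = (∑ ν ∈ Finset.Ioc k n, bernsteinPolynomial ℝ n ν).eval t := by
  simp [binomialTail, eval_finsetSum, bernsteinPolynomial]

theorem binomialTail_zero_right (n : ℕ) (t : ℝ) : binomialTail n 0 t = 1 - (1 - t) ^ n := by
  have h := congrArg (eval t) (bernsteinPolynomial.sum ℝ n)
  rw [Nat.range_succ_eq_Icc_zero, ← Finset.sum_Ioc_add_eq_sum_Icc n.zero_le, eval_add,
    ← binomialTail_eq_eval] at h
  simp only [bernsteinPolynomial, Nat.choose_zero_right, Nat.cast_one, pow_zero, mul_one,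
    tsub_zero, one_mul, eval_pow, eval_sub, eval_one, eval_X] at h
  linarith

theorem hasDerivAt_binomialTail {n k : ℕ} (hk : k ≤ n) (t : ℝ) :
    HasDerivAt (binomialTail n k) (n * (n - 1).choose k * t ^ k * (1 - t) ^ (n - 1 - k)) t := by
  have h := (∑ ν ∈ Finset.Ioc k n, bernsteinPolynomial ℝ n ν).hasDerivAt t
  rw [derivative_sum_bernsteinPolynomial_Ioc hk] at h
  rw [show binomialTail n k = _ from funext (binomialTail_eq_eval n k)]
  refine h.congr_deriv ?_
  simp [bernsteinPolynomial, mul_assoc]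

@[fun_prop]
theorem continuous_binomialTail (n k : ℕ) : Continuous (binomialTail n k) := by
  unfold binomialTail
  fun_prop

theorem isMinOn_binomialTail_add {n k : ℕ} (hk : k < n) {p : ℝ} (hp : p ∈ Icc (0 : ℝ) 1) :
    IsMinOn (fun t => (1 - p) ^ k * binomialTail n k t + (n - 1).choose k * p ^ k * (1 - t) ^ n)
      (Icc 0 1) p := by
  set g := fun t => (1 - p) ^ k * binomialTail n k t + (n - 1).choose k * p ^ k * (1 - t) ^ n
  have hg : ∀ t, HasDerivAt g (n * (n - 1).choose k * (1 - t) ^ (n - 1 - k) *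
      (((1 - p) * t) ^ k - (p * (1 - t)) ^ k)) t := by
    intro t
    have h1 := (hasDerivAt_binomialTail hk.le t).const_mul ((1 - p) ^ k)
    have h2 := (((hasDerivAt_id t).const_sub 1).pow n).const_mul (((n - 1).choose k : ℝ) * p ^ k)
    refine (h1.add h2).congr_deriv ?_
    have hsplit : (1 - t) ^ (n - 1) = (1 - t) ^ k * (1 - t) ^ (n - 1 - k) := by
      rw [← pow_add]; congr 1; omega
    simp only [id, hsplit, mul_pow]
    ring
  have hcont : Continuous g := continuous_iff_continuousAt.2 fun t => (hg t).continuousAt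
  have hdiff : Differentiable ℝ g := fun t => (hg t).differentiableAt
  have hfactor : ∀ t ∈ Icc (0 : ℝ) 1, 0 ≤ n * (n - 1).choose k * (1 - t) ^ (n - 1 - k) :=
    fun t ht => mul_nonneg (by positivity) (pow_nonneg (by linarith [ht.2]) _)
  have hanti : AntitoneOn g (Icc 0 p) := by
    refine antitoneOn_of_deriv_nonpos (convex_Icc 0 p) hcont.continuousOn
      hdiff.differentiableOn fun t ht => ?_
    rw [interior_Icc] at ht
    rw [(hg t).deriv]
    refine mul_nonpos_of_nonneg_of_nonpos (hfactor t ⟨ht.1.le, by linarith [ht.2, hp.2]⟩)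
      (sub_nonpos.2 (pow_le_pow_left₀ (by nlinarith [ht.1, hp.2]) (by nlinarith [ht.2]) k))
  have hmono : MonotoneOn g (Icc p 1) := by
    refine monotoneOn_of_deriv_nonneg (convex_Icc p 1) hcont.continuousOn
      hdiff.differentiableOn fun t ht => ?_
    rw [interior_Icc] at ht
    rw [(hg t).deriv]
    refine mul_nonneg (hfactor t ⟨by linarith [ht.1, hp.1], ht.2.le⟩)
      (sub_nonneg.2 (pow_le_pow_left₀ (by nlinarith [ht.2, hp.1]) (by nlinarith [ht.1]) k))
  intro t ht
  rcases le_total t p with htp | hpt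
  · exact hanti ⟨ht.1, htp⟩ ⟨hp.1, le_rfl⟩ htp
  · exact hmono ⟨le_rfl, hp.2⟩ ⟨hpt, ht.2⟩ hpt

theorem ContinuousOn.integrable_of_isCompact_of_ae_mem {X E : Type*} [TopologicalSpace X]
    [T2Space X] [MeasurableSpace X] [OpensMeasurableSpace X] [NormedAddCommGroup E]
    {μ : Measure X} [IsFiniteMeasure μ] {f : X → E} {K : Set X} (hf : ContinuousOn f K)
    (hK : IsCompact K) (hμK : ∀ᵐ x ∂μ, x ∈ K) : Integrable f μ := by
  rw [← Measure.restrict_eq_self_of_ae_mem hμK]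
  exact hf.integrableOn_compact hK

theorem binomialTail_le_integral_binomialTail {n k : ℕ} {p : ℝ} (hp : p ∈ Ico (0 : ℝ) 1)
    {μ : Measure ℝ} [IsProbabilityMeasure μ] (hμ : ∀ᵐ t ∂μ, t ∈ Icc (0 : ℝ) 1)
    (h : ∫ t, (1 - t) ^ n ∂μ ≤ (1 - p) ^ n) :
    binomialTail n k p ≤ ∫ t, binomialTail n k t ∂μ := by
  rcases le_or_gt n k with hnk | hkn
  · simp [binomialTail, Finset.Ioc_eq_empty_of_le hnk]
  have hint : ∀ f : ℝ → ℝ, Continuous f → Integrable f μ := fun f hf =>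
    hf.continuousOn.integrable_of_isCompact_of_ae_mem isCompact_Icc hμ
  set a := (1 - p) ^ k
  set c := ((n - 1).choose k : ℝ) * p ^ k
  have hmin : a * binomialTail n k p + c * (1 - p) ^ n ≤
      a * ∫ t, binomialTail n k t ∂μ + c * ∫ t, (1 - t) ^ n ∂μ := by
    rw [← integral_const_mul, ← integral_const_mul,
      ← integral_add ((hint _ (continuous_binomialTail n k)).const_mul a)
        ((hint _ (by fun_prop)).const_mul c)]
    calc _ = ∫ _, (a * binomialTail n k p + c * (1 - p) ^ n) ∂μ := by simp
      _ ≤ _ := integral_mono_ae (integrable_const _) (hint _ (by fun_prop)) <| by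
        filter_upwards [hμ] with t ht using isMinOn_binomialTail_add hkn ⟨hp.1, hp.2.le⟩ ht
  have ha : 0 < a := pow_pos (by linarith [hp.2]) k
  have hc : 0 ≤ c := mul_nonneg (Nat.cast_nonneg _) (pow_nonneg hp.1 k)
  nlinarith [mul_le_mul_of_nonneg_left h hc]

theorem stmt_12_general (n : ℕ) (p : ℝ) (hp : p ∈ Ioo (0 : ℝ) 1)
    (μ : Measure ℝ) [IsProbabilityMeasure μ] (hμ : μ (Ioo (0 : ℝ) 1)ᶜ = 0) :
    (∀ k : ℕ,
        ∑ x ∈ Finset.Ioc k n, (n.choose x : ℝ) * p ^ x * (1 - p) ^ (n - x) ≤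
        ∑ x ∈ Finset.Ioc k n, ∫ t, (n.choose x : ℝ) * t ^ x * (1 - t) ^ (n - x) ∂μ) ↔
      ∫ t, (1 - t) ^ n ∂μ ≤ (1 - p) ^ n := by
  have hμ' : ∀ᵐ t ∂μ, t ∈ Icc (0 : ℝ) 1 :=
    (show ∀ᵐ t ∂μ, t ∈ Ioo (0 : ℝ) 1 from mem_ae_iff.2 hμ).mono fun _ ht => Ioo_subset_Icc_self ht
  have hint : ∀ f : ℝ → ℝ, Continuous f → Integrable f μ := fun f hf =>
    hf.continuousOn.integrable_of_isCompact_of_ae_mem isCompact_Icc hμ'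
  have hsum (k : ℕ) : ∑ x ∈ Finset.Ioc k n, ∫ t, (n.choose x : ℝ) * t ^ x * (1 - t) ^ (n - x) ∂μ =
      ∫ t, binomialTail n k t ∂μ :=
    (integral_finsetSum _ fun _ _ => hint _ (by fun_prop)).symm
  simp only [hsum]
  change (∀ k, binomialTail n k p ≤ _) ↔ _
  refine ⟨fun h => ?_, fun h _ => binomialTail_le_integral_binomialTail ⟨hp.1.le, hp.2⟩ hμ' h⟩
  have h0 := h 0
  simp only [binomialTail_zero_right] at h0
  rw [integral_sub (integrable_const 1) (hint _ (by fun_prop)), integral_const, probReal_univ,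
    one_smul] at h0
  linarith

/-- Example 2, "st" part: let `X ~ Binomial(n, p)`, `p ∈ (0,1)`, and let `Y` be a
mixture of `Binomial(n, t)` distributions with respect to a probability measure `μ`
on `(0, 1)`. Then `X ≤_st Y` iff `∫ (1−t)^n dμ(t) ≤ (1−p)^n`. -/
theorem stmt_12 (n : ℕ) (hn : 0 < n) (p : ℝ) (hp : p ∈ Ioo (0 : ℝ) 1)
    (μ : Measure ℝ) [IsProbabilityMeasure μ] (hμ : μ (Ioo (0 : ℝ) 1)ᶜ = 0) :
    (∀ k : ℕ,
        ∑ x ∈ Finset.Ioc k n, (n.choose x : ℝ) * p ^ x * (1 - p) ^ (n - x) ≤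
        ∑ x ∈ Finset.Ioc k n, ∫ t, (n.choose x : ℝ) * t ^ x * (1 - t) ^ (n - x) ∂μ) ↔
      ∫ t, (1 - t) ^ n ∂μ ≤ (1 - p) ^ n :=
  stmt_12_general n p hp μ hμ
end

section
/- Let X ~ Gamma(α, β) (scale parameterization, density proportional to x^{α−1} e^{−x/β}) and let Y be a scale mixture of Gamma(α, t) distributions with respect to a probability measure μ on t ∈ (0,∞). Then X ≤_st Y if and only if ∫ t^{−α} dμ(t) ≤ β^{−α}. -/
/-!
Write `γ(α, r) = ∫₀ʳ e^{-s} s^{α-1} ds`. The substitution `y = t s` and Fubini turn the two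
survival functions at `x ≥ 0` into `1 - γ(α, x/β)/Γ(α)` and `1 - ∫ γ(α, x/t) dμ(t)/Γ(α)`, so
`X ≤_st Y` says `∫ γ(α, x/t) dμ(t) ≤ γ(α, x/β)` for every `x > 0`.

As a function of `u = t^{-α}`, `γ(α, x/t) = γ(α, x u^{1/α})` is increasing and concave, so its
tangent line at `β^{-α}` turns `∫ t^{-α} dμ ≤ β^{-α}` into that inequality (Jensen).
Conversely, the bounds `e^{-r} r^α/α ≤ γ(α, r) ≤ r^α/α` turn the inequality at `x` into
`∫ e^{-x/t} t^{-α} dμ(t) ≤ β^{-α}`, and Fatou's lemma as `x → 0⁺` gives the moment bound.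
-/

open MeasureTheory Set Filter Topology
open scoped ENNReal

theorem intervalIntegral.integral_mul_le_of_antitone {f g : ℝ → ℝ} {a b : ℝ} (hf : Antitone f)
    (hg : ∀ s ∈ uIcc a b, 0 ≤ g s) (hfg : IntervalIntegrable (fun s => f s * g s) volume a b)
    (hgi : IntervalIntegrable g volume a b) :
    ∫ s in a..b, f s * g s ≤ f a * ∫ s in a..b, g s := by
  rw [← intervalIntegral.integral_const_mul]
  rcases le_total a b with hab | hba
  · exact intervalIntegral.integral_mono_on hab hfg (hgi.const_mul _) fun s hs =>
      mul_le_mul_of_nonneg_right (hf hs.1) (hg s (Icc_subset_uIcc hs))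
  · rw [intervalIntegral.integral_symm b a, intervalIntegral.integral_symm b a, neg_le_neg_iff]
    exact intervalIntegral.integral_mono_on hba (hgi.symm.const_mul _) hfg.symm fun s hs =>
      mul_le_mul_of_nonneg_right (hf hs.2) (hg s (Icc_subset_uIcc' hs))

theorem MeasureTheory.lintegral_le_of_tendsto_ae {α ι : Type*} [MeasurableSpace α] {μ : Measure α}
    {l : Filter ι} [l.NeBot] [l.IsCountablyGenerated] {f : ι → α → ℝ≥0∞} {g : α → ℝ≥0∞}
    {B : ℝ≥0∞} (hf : ∀ i, AEMeasurable (f i) μ)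
    (hlim : ∀ᵐ a ∂μ, Tendsto (fun i => f i a) l (𝓝 (g a)))
    (hB : ∀ᶠ i in l, ∫⁻ a, f i a ∂μ ≤ B) : ∫⁻ a, g a ∂μ ≤ B :=
  calc ∫⁻ a, g a ∂μ = ∫⁻ a, liminf (fun i => f i a) l ∂μ :=
        lintegral_congr_ae (hlim.mono fun _ h => h.liminf_eq.symm)
    _ ≤ liminf (fun i => ∫⁻ a, f i a ∂μ) l := lintegral_liminf_le' hf
    _ ≤ B := liminf_le_of_frequently_le' hB.frequently

theorem setIntegral_Ioi_ite_pos {E : Type*} [NormedAddCommGroup E] [NormedSpace ℝ E]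
    (f : ℝ → E) (x : ℝ) :
    ∫ y in Ioi x, (if 0 < y then f y else 0) = ∫ y in Ioi (max x 0), f y := by
  rw [← Ioi_inter_Ioi, ← setIntegral_indicator measurableSet_Ioi]
  rfl

noncomputable def lowerIncompleteGamma (α r : ℝ) : ℝ :=
  ∫ s in 0..r, Real.exp (-s) * s ^ (α - 1)

section lowerIncompleteGamma

variable {α : ℝ}

theorem intervalIntegrable_exp_neg_mul_rpow (hα : 0 < α) (a b : ℝ) :
    IntervalIntegrable (fun s => Real.exp (-s) * s ^ (α - 1)) volume a b :=
  (intervalIntegral.intervalIntegrable_rpow' (by linarith)).continuousOn_mul (by fun_prop)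

theorem continuous_lowerIncompleteGamma (hα : 0 < α) : Continuous (lowerIncompleteGamma α) :=
  intervalIntegral.continuous_primitive (intervalIntegrable_exp_neg_mul_rpow hα) 0

theorem lowerIncompleteGamma_add_integral_Ioi (hα : 0 < α) {r : ℝ} (hr : 0 ≤ r) :
    lowerIncompleteGamma α r + ∫ s in Ioi r, Real.exp (-s) * s ^ (α - 1) = Real.Gamma α := by
  rw [Real.Gamma_eq_integral hα]
  exact intervalIntegral.integral_interval_add_Ioi (Real.GammaIntegral_convergent hα)
    ((Real.GammaIntegral_convergent hα).mono_set (Ioi_subset_Ioi hr))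

theorem lowerIncompleteGamma_nonneg {r : ℝ} (hr : 0 ≤ r) : 0 ≤ lowerIncompleteGamma α r :=
  intervalIntegral.integral_nonneg hr fun s hs => by have := hs.1; positivity

theorem lowerIncompleteGamma_le_Gamma (hα : 0 < α) {r : ℝ} (hr : 0 ≤ r) :
    lowerIncompleteGamma α r ≤ Real.Gamma α := by
  have : 0 ≤ ∫ s in Ioi r, Real.exp (-s) * s ^ (α - 1) :=
    setIntegral_nonneg measurableSet_Ioi fun s hs => by have := hr.trans hs.le; positivity
  linarith [lowerIncompleteGamma_add_integral_Ioi hα hr]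

/-- The derivative of `lowerIncompleteGamma α r` with respect to `r ^ α` is `e ^ (-r) / α`,
which decreases in `r`: this is the supporting line at `c` of the resulting concave function. -/
theorem lowerIncompleteGamma_sub_le (hα : 0 < α) {c r : ℝ} (hc : 0 ≤ c) (hr : 0 ≤ r) :
    lowerIncompleteGamma α r - Real.exp (-c) * r ^ α / α ≤
      lowerIncompleteGamma α c - Real.exp (-c) * c ^ α / α := by
  have hpow : ∫ s in c..r, s ^ (α - 1) = (r ^ α - c ^ α) / α := by
    rw [integral_rpow (Or.inl (by linarith)), sub_add_cancel]
  have hle := intervalIntegral.integral_mul_le_of_antitone (a := c) (b := r)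
    (fun _ _ h => Real.exp_le_exp.2 (neg_le_neg h)) (fun s hs => ?_)
    (intervalIntegrable_exp_neg_mul_rpow hα c r)
    (intervalIntegral.intervalIntegrable_rpow' (by linarith))
  · rw [← intervalIntegral.integral_interval_sub_left (a := 0)
      (intervalIntegrable_exp_neg_mul_rpow hα _ _) (intervalIntegrable_exp_neg_mul_rpow hα _ _),
      hpow] at hle
    unfold lowerIncompleteGamma
    linarith [show Real.exp (-c) * ((r ^ α - c ^ α) / α) =
      Real.exp (-c) * r ^ α / α - Real.exp (-c) * c ^ α / α by ring]
  · have : 0 ≤ s := (le_min hc hr).trans hs.1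
    positivity

theorem exp_neg_mul_rpow_div_le_lowerIncompleteGamma (hα : 0 < α) {r : ℝ} (hr : 0 ≤ r) :
    Real.exp (-r) * r ^ α / α ≤ lowerIncompleteGamma α r := by
  simpa [lowerIncompleteGamma, Real.zero_rpow hα.ne'] using
    lowerIncompleteGamma_sub_le hα hr le_rfl

theorem lowerIncompleteGamma_le_rpow_div (hα : 0 < α) {r : ℝ} (hr : 0 ≤ r) :
    lowerIncompleteGamma α r ≤ r ^ α / α := by
  simpa [lowerIncompleteGamma, Real.zero_rpow hα.ne'] using
    lowerIncompleteGamma_sub_le hα le_rfl hr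

end lowerIncompleteGamma

noncomputable def gammaScaleDensity (α β y : ℝ) : ℝ :=
  (Real.Gamma α)⁻¹ * β ^ (-α) * y ^ (α - 1) * Real.exp (-y / β)

section gammaScaleDensity

variable {α t x : ℝ}

theorem gammaScaleDensity_eq (ht : 0 < t) {y : ℝ} (hy : 0 ≤ y) :
    gammaScaleDensity α t y =
      ((Real.Gamma α)⁻¹ * t⁻¹) * (Real.exp (-(t⁻¹ * y)) * (t⁻¹ * y) ^ (α - 1)) := by
  rw [gammaScaleDensity, Real.mul_rpow (inv_nonneg.2 ht.le) hy, Real.inv_rpow ht.le,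
    Real.rpow_neg ht.le, Real.rpow_sub_one ht.ne', neg_div, inv_mul_eq_div]
  field_simp

theorem integrableOn_gammaScaleDensity (hα : 0 < α) (ht : 0 < t) (hx : 0 ≤ x) :
    IntegrableOn (gammaScaleDensity α t) (Ioi x) := by
  have h : IntegrableOn (fun y => Real.exp (-(t⁻¹ * y)) * (t⁻¹ * y) ^ (α - 1)) (Ioi x) := by
    rw [integrableOn_Ioi_comp_mul_left_iff (fun s => Real.exp (-s) * s ^ (α - 1)) x
      (inv_pos.2 ht)]
    exact (Real.GammaIntegral_convergent hα).mono_set (Ioi_subset_Ioi (by positivity))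
  exact IntegrableOn.congr_fun (h.const_mul _)
    (fun y hy => (gammaScaleDensity_eq ht (hx.trans hy.le)).symm) measurableSet_Ioi

theorem integral_Ioi_gammaScaleDensity (hα : 0 < α) (ht : 0 < t) (hx : 0 ≤ x) :
    ∫ y in Ioi x, gammaScaleDensity α t y = 1 - lowerIncompleteGamma α (x / t) / Real.Gamma α := by
  rw [setIntegral_congr_fun measurableSet_Ioi fun y hy => gammaScaleDensity_eq ht (hx.trans hy.le),
    integral_const_mul, integral_comp_mul_left_Ioi (fun s => Real.exp (-s) * s ^ (α - 1)) x
      (inv_pos.2 ht), smul_eq_mul, inv_inv, inv_mul_eq_div t x,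
    eq_sub_of_add_eq' (lowerIncompleteGamma_add_integral_Ioi hα (by positivity : 0 ≤ x / t))]
  field_simp [(Real.Gamma_pos_of_pos hα).ne']

end gammaScaleDensity

section mixture

variable {α β x : ℝ} {μ : Measure ℝ}

theorem integrable_lowerIncompleteGamma_div [IsFiniteMeasure μ] (hα : 0 < α)
    (hμ : ∀ᵐ t ∂μ, 0 < t) (hx : 0 ≤ x) :
    Integrable (fun t => lowerIncompleteGamma α (x / t)) μ := by
  refine .of_bound ((continuous_lowerIncompleteGamma hα).measurable.comp
    (measurable_const.div measurable_id)).aestronglyMeasurable (Real.Gamma α) ?_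
  filter_upwards [hμ] with t ht
  have hxt : 0 ≤ x / t := div_nonneg hx ht.le
  rw [Real.norm_of_nonneg (lowerIncompleteGamma_nonneg hxt)]
  exact lowerIncompleteGamma_le_Gamma hα hxt

theorem integral_Ioi_integral_gammaScaleDensity [IsFiniteMeasure μ] (hα : 0 < α)
    (hμ : ∀ᵐ t ∂μ, 0 < t) (hx : 0 ≤ x) :
    ∫ y in Ioi x, ∫ t, gammaScaleDensity α t y ∂μ =
      ∫ t, (1 - lowerIncompleteGamma α (x / t) / Real.Gamma α) ∂μ := by
  have hmeas : Measurable (Function.uncurry fun t y => gammaScaleDensity α t y) := by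
    unfold gammaScaleDensity; fun_prop
  have hint : Integrable (Function.uncurry fun t y => gammaScaleDensity α t y)
      (μ.prod (volume.restrict (Ioi x))) := by
    rw [integrable_prod_iff hmeas.aestronglyMeasurable]
    refine ⟨hμ.mono fun t ht => integrableOn_gammaScaleDensity hα ht hx,
      .of_bound hmeas.aestronglyMeasurable.norm.integral_prod_right' 1 ?_⟩
    filter_upwards [hμ] with t ht
    have hnn : ∀ y ∈ Ioi x, 0 ≤ gammaScaleDensity α t y := fun y hy => by
      have := hx.trans hy.le
      unfold gammaScaleDensity; positivity
    rw [Real.norm_of_nonneg (integral_nonneg fun _ => norm_nonneg _)]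
    simp only [Function.uncurry_apply_pair]
    rw [setIntegral_congr_fun measurableSet_Ioi fun y hy => Real.norm_of_nonneg (hnn y hy),
      integral_Ioi_gammaScaleDensity hα ht hx]
    exact sub_le_self 1 (div_nonneg (lowerIncompleteGamma_nonneg (div_nonneg hx ht.le))
      (Real.Gamma_pos_of_pos hα).le)
  rw [← integral_integral_swap hint]
  exact integral_congr_ae (hμ.mono fun t ht => integral_Ioi_gammaScaleDensity hα ht hx)

theorem integral_Ioi_gammaScaleDensity_le_iff [IsProbabilityMeasure μ] (hα : 0 < α) (hβ : 0 < β)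
    (hμ : ∀ᵐ t ∂μ, 0 < t) (hx : 0 ≤ x) :
    ∫ y in Ioi x, gammaScaleDensity α β y ≤ ∫ y in Ioi x, ∫ t, gammaScaleDensity α t y ∂μ ↔
      ∫ t, lowerIncompleteGamma α (x / t) ∂μ ≤ lowerIncompleteGamma α (x / β) := by
  rw [integral_Ioi_integral_gammaScaleDensity hα hμ hx, integral_Ioi_gammaScaleDensity hα hβ hx,
    integral_sub (integrable_const 1) ((integrable_lowerIncompleteGamma_div hα hμ hx).div_const _),
    integral_const, integral_div, probReal_univ, one_smul, sub_le_sub_iff_left,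
    div_le_div_iff_of_pos_right (Real.Gamma_pos_of_pos hα)]

theorem integral_lowerIncompleteGamma_div_le_of_lintegral_rpow_neg_le [IsProbabilityMeasure μ]
    (hα : 0 < α) (hβ : 0 < β) (hμ : ∀ᵐ t ∂μ, 0 < t)
    (hm : ∫⁻ t, ENNReal.ofReal (t ^ (-α)) ∂μ ≤ ENNReal.ofReal (β ^ (-α))) (hx : 0 ≤ x) :
    ∫ t, lowerIncompleteGamma α (x / t) ∂μ ≤ lowerIncompleteGamma α (x / β) := by
  have hnn : 0 ≤ᵐ[μ] fun t => t ^ (-α) := hμ.mono fun t ht => Real.rpow_nonneg ht.le _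
  have hint : Integrable (fun t => t ^ (-α)) μ :=
    ⟨(measurable_id.pow_const _).aestronglyMeasurable,
      (hasFiniteIntegral_iff_ofReal hnn).2 (hm.trans_lt ENNReal.ofReal_lt_top)⟩
  have hmean : ∫ t, t ^ (-α) ∂μ ≤ β ^ (-α) := by
    rwa [← ENNReal.ofReal_le_ofReal_iff (by positivity),
      ofReal_integral_eq_lintegral_ofReal hint hnn]
  set K := Real.exp (-(x / β)) * x ^ α / α
  have hK : 0 ≤ K := by positivity
  have hrpow : ∀ t, 0 < t → (x / t) ^ α = x ^ α * t ^ (-α) := fun t ht => by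
    rw [Real.div_rpow hx ht.le, Real.rpow_neg ht.le, div_eq_mul_inv]
  have htangent : ∀ᵐ t ∂μ, lowerIncompleteGamma α (x / t) ≤
      lowerIncompleteGamma α (x / β) - K * β ^ (-α) + K * t ^ (-α) := by
    filter_upwards [hμ] with t ht
    have := lowerIncompleteGamma_sub_le hα (div_nonneg hx hβ.le) (div_nonneg hx ht.le)
    rw [hrpow t ht, hrpow β hβ] at this
    linarith [show Real.exp (-(x / β)) * (x ^ α * t ^ (-α)) / α = K * t ^ (-α) by ring,
      show Real.exp (-(x / β)) * (x ^ α * β ^ (-α)) / α = K * β ^ (-α) by ring]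
  calc ∫ t, lowerIncompleteGamma α (x / t) ∂μ
      ≤ ∫ t, (lowerIncompleteGamma α (x / β) - K * β ^ (-α) + K * t ^ (-α)) ∂μ :=
        integral_mono_ae (integrable_lowerIncompleteGamma_div hα hμ hx)
          ((integrable_const _).add (hint.const_mul K)) htangent
    _ = lowerIncompleteGamma α (x / β) - K * (β ^ (-α) - ∫ t, t ^ (-α) ∂μ) := by
        rw [integral_add (integrable_const _) (hint.const_mul K), integral_const, probReal_univ,
          one_smul, integral_const_mul]
        ring
    _ ≤ lowerIncompleteGamma α (x / β) := sub_le_self _ (mul_nonneg hK (sub_nonneg.2 hmean))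

theorem lintegral_exp_neg_div_mul_rpow_neg_le [IsFiniteMeasure μ] (hα : 0 < α) (hβ : 0 < β)
    (hμ : ∀ᵐ t ∂μ, 0 < t) (hx : 0 < x)
    (h : ∫ t, lowerIncompleteGamma α (x / t) ∂μ ≤ lowerIncompleteGamma α (x / β)) :
    ∫⁻ t, ENNReal.ofReal (Real.exp (-(x / t)) * t ^ (-α)) ∂μ ≤ ENNReal.ofReal (β ^ (-α)) := by
  have hA : 0 < x ^ α / α := by positivity
  have hrpow : ∀ t, 0 < t → (x / t) ^ α = x ^ α * t ^ (-α) := fun t ht => by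
    rw [Real.div_rpow hx.le ht.le, Real.rpow_neg ht.le, div_eq_mul_inv]
  have hlower : ∀ᵐ t ∂μ, ENNReal.ofReal (x ^ α / α * (Real.exp (-(x / t)) * t ^ (-α))) ≤
      ENNReal.ofReal (lowerIncompleteGamma α (x / t)) := by
    filter_upwards [hμ] with t ht
    have := exp_neg_mul_rpow_div_le_lowerIncompleteGamma hα (div_nonneg hx.le ht.le)
    rw [hrpow t ht] at this
    exact ENNReal.ofReal_le_ofReal (le_of_eq_of_le (by ring) this)
  have hupper : lowerIncompleteGamma α (x / β) ≤ x ^ α / α * β ^ (-α) := by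
    have := lowerIncompleteGamma_le_rpow_div hα (div_nonneg hx.le hβ.le)
    rwa [hrpow β hβ, mul_div_right_comm] at this
  rw [← ENNReal.mul_le_mul_iff_right (ENNReal.ofReal_pos.2 hA).ne' ENNReal.ofReal_ne_top]
  calc ENNReal.ofReal (x ^ α / α) * ∫⁻ t, ENNReal.ofReal (Real.exp (-(x / t)) * t ^ (-α)) ∂μ
      = ∫⁻ t, ENNReal.ofReal (x ^ α / α * (Real.exp (-(x / t)) * t ^ (-α))) ∂μ := by
        rw [← lintegral_const_mul' _ _ ENNReal.ofReal_ne_top]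
        simp only [ENNReal.ofReal_mul hA.le]
    _ ≤ ∫⁻ t, ENNReal.ofReal (lowerIncompleteGamma α (x / t)) ∂μ := lintegral_mono_ae hlower
    _ = ENNReal.ofReal (∫ t, lowerIncompleteGamma α (x / t) ∂μ) :=
        (ofReal_integral_eq_lintegral_ofReal (integrable_lowerIncompleteGamma_div hα hμ hx.le)
          (hμ.mono fun t ht => lowerIncompleteGamma_nonneg (div_nonneg hx.le ht.le))).symm
    _ ≤ ENNReal.ofReal (x ^ α / α * β ^ (-α)) := ENNReal.ofReal_le_ofReal (h.trans hupper)
    _ = ENNReal.ofReal (x ^ α / α) * ENNReal.ofReal (β ^ (-α)) := ENNReal.ofReal_mul hA.le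

theorem lintegral_rpow_neg_le_of_integral_lowerIncompleteGamma_le [IsFiniteMeasure μ]
    (hα : 0 < α) (hβ : 0 < β) (hμ : ∀ᵐ t ∂μ, 0 < t)
    (h : ∀ x, 0 < x → ∫ t, lowerIncompleteGamma α (x / t) ∂μ ≤ lowerIncompleteGamma α (x / β)) :
    ∫⁻ t, ENNReal.ofReal (t ^ (-α)) ∂μ ≤ ENNReal.ofReal (β ^ (-α)) := by
  refine lintegral_le_of_tendsto_ae (l := 𝓝[>] 0) (fun x => by fun_prop) ?_
    (eventually_nhdsWithin_of_forall fun x hx =>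
      lintegral_exp_neg_div_mul_rpow_neg_le hα hβ hμ hx (h x hx))
  refine ae_of_all _ fun t => tendsto_nhdsWithin_of_tendsto_nhds ?_
  simpa [Function.comp_def] using (ENNReal.continuous_ofReal.comp
    (by fun_prop : Continuous fun x : ℝ => Real.exp (-(x / t)) * t ^ (-α))).tendsto 0

end mixture

/-- Example 4, "st" part: let `X ~ Gamma(α, β)` (scale parameterization) and let `Y`
be a scale mixture of `Gamma(α, t)` distributions with respect to a probability
measure `μ` on `(0, ∞)`. Then `X ≤_st Y` iff `∫ t^{−α} dμ(t) ≤ β^{−α}`. -/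
theorem stmt_14 (α β : ℝ) (hα : 0 < α) (hβ : 0 < β)
    (μ : Measure ℝ) [IsProbabilityMeasure μ] (hμ : μ (Ioi 0)ᶜ = 0) :
    (∀ x : ℝ,
        (∫ y in Ioi x, if 0 < y then
            (Real.Gamma α)⁻¹ * β ^ (-α) * y ^ (α - 1) * Real.exp (-y / β) else 0) ≤
        ∫ y in Ioi x, if 0 < y then
            ∫ t, (Real.Gamma α)⁻¹ * t ^ (-α) * y ^ (α - 1) * Real.exp (-y / t) ∂μ
          else 0) ↔
      ∫⁻ t, ENNReal.ofReal (t ^ (-α)) ∂μ ≤ ENNReal.ofReal (β ^ (-α)) := by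
  have hpos : ∀ᵐ t ∂μ, 0 < t := mem_ae_iff.2 hμ
  simp only [setIntegral_Ioi_ite_pos]
  constructor
  · refine fun h => lintegral_rpow_neg_le_of_integral_lowerIncompleteGamma_le hα hβ hpos
      fun x hx => ?_
    have hx' := h x
    rw [max_eq_left hx.le] at hx'
    exact (integral_Ioi_gammaScaleDensity_le_iff hα hβ hpos hx.le).1 hx'
  · intro hm x
    exact (integral_Ioi_gammaScaleDensity_le_iff hα hβ hpos (le_max_right x 0)).2
      (integral_lowerIncompleteGamma_div_le_of_lintegral_rpow_neg_le hα hβ hpos hm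
        (le_max_right x 0))
end
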